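/- arXiv:1103.0077 — 2 statements merged into one kernel-verified Lean document; each statement's English description precedes it below -/
import Mathlib

section
/- Let k ≥ 2 and let P ∈ St_{2^k} be a standard tableau of shape 2^k. Then full_n^P = 1 for all n ≥ 1 if and only if P is degenerate, i.e. for every 1 ≤ i < k, at least one of P(i,1)+1 = P(i+1,1) or P(i,2)+1 = P(i+1,2) holds. -/
/-- `F` is a filling of the `k × n` rectangle (row `i`, `1 ≤ i ≤ k`, counted from the
bottom; column `j`, `1 ≤ j ≤ n`) with the integers `1, …, kn`, each used exactly once,
whose entries strictly increase up each column.  Cells outside the rectangle carry `0`. -/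
def IsFilling (n k : ℕ) (F : ℕ → ℕ → ℕ) : Prop :=
  (∀ i j, F i j ≠ 0 → 1 ≤ i ∧ i ≤ k ∧ 1 ≤ j ∧ j ≤ n) ∧
  Set.BijOn (fun p : ℕ × ℕ => F p.1 p.2) (Set.Icc 1 k ×ˢ Set.Icc 1 n) (Set.Icc 1 (k * n)) ∧
  ∀ i j, 1 ≤ i → i < k → 1 ≤ j → j ≤ n → F i j < F (i + 1) j

/-- The entries of `F` in columns `i, …, i + j - 1` are in the same relative order as the
`k × j` pattern `P`; i.e. `F` has a `P`-match starting at position `i`. -/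
def MatchAt (j k : ℕ) (P F : ℕ → ℕ → ℕ) (i : ℕ) : Prop :=
  ∀ a b c d, 1 ≤ a → a ≤ k → 1 ≤ b → b ≤ j → 1 ≤ c → c ≤ k → 1 ≤ d → d ≤ j →
    (F a (i - 1 + b) < F c (i - 1 + d) ↔ P a b < P c d)

/-- `full_n^Υ`: the number of fillings `F ∈ F_{n,k}` having `Υ`-matches starting at
every position `1, …, n-1` (for two-column patterns `Υ ⊆ F_{2,k}`). -/
noncomputable def fullCount (n k : ℕ) (U : Set (ℕ → ℕ → ℕ)) : ℕ :=
  Nat.card {F : ℕ → ℕ → ℕ // IsFilling n k F ∧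
    ∀ i, 1 ≤ i → i ≤ n - 1 → ∃ P ∈ U, MatchAt 2 k P F i}

namespace Stmt16


def grid (k n : ℕ) : Finset (ℕ × ℕ) := Finset.Icc 1 k ×ˢ Finset.Icc 1 n

lemma mem_grid {k n : ℕ} {x : ℕ × ℕ} :
    x ∈ grid k n ↔ (1 ≤ x.1 ∧ x.1 ≤ k) ∧ (1 ≤ x.2 ∧ x.2 ≤ n) := by
  simp [grid, Finset.mem_product]

lemma grid_card (k n : ℕ) : (grid k n).card = k * n := by
  simp [grid]

lemma coe_grid (k n : ℕ) :
    (↑(grid k n) : Set (ℕ × ℕ)) = Set.Icc 1 k ×ˢ Set.Icc 1 n := by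
  simp [grid, Finset.coe_product]

/-- rank function of an injective key -/
def rk (S : Finset (ℕ × ℕ)) (K : ℕ × ℕ → ℕ) (x : ℕ × ℕ) : ℕ :=
  (S.filter (fun y => K y ≤ K x)).card

lemma rk_le_of_le {S : Finset (ℕ × ℕ)} {K : ℕ × ℕ → ℕ} {x y : ℕ × ℕ}
    (h : K x ≤ K y) : rk S K x ≤ rk S K y := by
  apply Finset.card_le_card
  intro z hz
  simp only [Finset.mem_filter] at hz ⊢
  exact ⟨hz.1, le_trans hz.2 h⟩

lemma rk_lt_of_lt {S : Finset (ℕ × ℕ)} {K : ℕ × ℕ → ℕ} {x y : ℕ × ℕ}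
    (hy : y ∈ S) (h : K x < K y) : rk S K x < rk S K y := by
  apply Finset.card_lt_card
  constructor
  · intro z hz
    simp only [Finset.mem_filter] at hz ⊢
    exact ⟨hz.1, le_trans hz.2 h.le⟩
  · intro hsub
    have hy' : y ∈ S.filter (fun z => K z ≤ K y) := by
      simp [Finset.mem_filter, hy]
    have := hsub hy'
    simp only [Finset.mem_filter] at this
    omega

lemma rk_lt_iff {S : Finset (ℕ × ℕ)} {K : ℕ × ℕ → ℕ} {x y : ℕ × ℕ}
    (hx : x ∈ S) (hy : y ∈ S) : rk S K x < rk S K y ↔ K x < K y := by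
  constructor
  · intro h
    by_contra hc
    push_neg at hc
    exact absurd (rk_le_of_le (S := S) hc) (by omega)
  · exact rk_lt_of_lt hy

lemma rk_pos {S : Finset (ℕ × ℕ)} {K : ℕ × ℕ → ℕ} {x : ℕ × ℕ} (hx : x ∈ S) :
    1 ≤ rk S K x := by
  have h1 : x ∈ S.filter (fun y => K y ≤ K x) := by simp [Finset.mem_filter, hx]
  have h2 := Finset.card_pos.mpr ⟨x, h1⟩
  simpa [rk] using h2

lemma rk_le_card {S : Finset (ℕ × ℕ)} {K : ℕ × ℕ → ℕ} {x : ℕ × ℕ} :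
    rk S K x ≤ S.card :=
  Finset.card_le_card (Finset.filter_subset _ _)

lemma rk_injOn {S : Finset (ℕ × ℕ)} {K : ℕ × ℕ → ℕ} (hK : Set.InjOn K S) :
    Set.InjOn (rk S K) S := by
  intro x hx y hy h
  by_contra hne
  rcases lt_trichotomy (K x) (K y) with h1 | h1 | h1
  · have := rk_lt_of_lt (S := S) hy h1; omega
  · exact hne (hK hx hy h1)
  · have := rk_lt_of_lt (S := S) hx h1; omega

lemma rk_bijOn {S : Finset (ℕ × ℕ)} {K : ℕ × ℕ → ℕ} (hK : Set.InjOn K S) :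
    Set.BijOn (rk S K) S (Set.Icc 1 S.card) := by
  refine ⟨fun x hx => ?_, rk_injOn hK, fun v hv => ?_⟩
  · exact Set.mem_Icc.mpr ⟨rk_pos hx, rk_le_card⟩
  · have hv' : v ∈ Finset.Icc 1 S.card := by
      simpa [Finset.mem_Icc] using Set.mem_Icc.mp hv
    have := Finset.surj_on_of_inj_on_of_card_le (s := S) (t := Finset.Icc 1 S.card)
      (fun x _ => rk S K x)
      (fun x hx => by simp [Finset.mem_Icc]; exact ⟨rk_pos hx, rk_le_card⟩)
      (fun x y hx hy h => rk_injOn hK hx hy h)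
      (by simp)
      v hv'
    rcases this with ⟨x, hx, hxv⟩
    exact ⟨x, hx, hxv.symm⟩

/-- for a bijection onto `[1, card]`, counting values `≤ V` gives `V`. -/
lemma card_filter_le_of_bijOn {S : Finset (ℕ × ℕ)} {F : ℕ × ℕ → ℕ}
    (h : Set.BijOn F S (Set.Icc 1 S.card)) {V : ℕ} (hV : V ≤ S.card) :
    (S.filter (fun y => F y ≤ V)).card = V := by
  have : (S.filter (fun y => F y ≤ V)).card = (Finset.Icc 1 V).card := by
    apply Finset.card_bij (fun y _ => F y)
    · intro y hy
      simp only [Finset.mem_filter] at hy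
      have := h.mapsTo hy.1
      simp only [Set.mem_Icc] at this
      simp [Finset.mem_Icc]
      exact ⟨this.1, hy.2⟩
    · intro y hy z hz hyz
      simp only [Finset.mem_filter] at hy hz
      exact h.injOn hy.1 hz.1 hyz
    · intro v hv
      simp only [Finset.mem_Icc] at hv
      have hv' : v ∈ Set.Icc 1 S.card := Set.mem_Icc.mpr ⟨hv.1, le_trans hv.2 hV⟩
      rcases h.surjOn hv' with ⟨y, hy, hyv⟩
      exact ⟨y, Finset.mem_filter.mpr ⟨hy, by omega⟩, hyv⟩
  simpa using this

lemma value_eq_rank {S : Finset (ℕ × ℕ)} {F : ℕ × ℕ → ℕ}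
    (h : Set.BijOn F S (Set.Icc 1 S.card)) {x : ℕ × ℕ} (hx : x ∈ S) :
    F x = rk S F x := by
  have hFx : F x ∈ Set.Icc 1 S.card := h.mapsTo hx
  simp only [Set.mem_Icc] at hFx
  exact (card_filter_le_of_bijOn h hFx.2).symm



variable {n k : ℕ} {F : ℕ → ℕ → ℕ}

lemma isFilling_bijOn_grid (hF : IsFilling n k F) :
    Set.BijOn (fun p : ℕ × ℕ => F p.1 p.2) (grid k n) (Set.Icc 1 ((grid k n).card)) := by
  rw [coe_grid, grid_card]
  exact hF.2.1

/-- strict monotonicity along a column -/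
lemma fill_col_lt (hF : IsFilling n k F) {j a c : ℕ} (hj1 : 1 ≤ j) (hjn : j ≤ n)
    (ha : 1 ≤ a) (hac : a < c) (hck : c ≤ k) : F a j < F c j := by
  induction c with
  | zero => omega
  | succ m ih =>
    rcases Nat.lt_or_ge a m with h | h
    · exact lt_trans (ih h (by omega)) (hF.2.2 m j (by omega) (by omega) hj1 hjn)
    · have : a = m := by omega
      subst this
      exact hF.2.2 a j ha (by omega) hj1 hjn

lemma fill_col_le (hF : IsFilling n k F) {j a c : ℕ} (hj1 : 1 ≤ j) (hjn : j ≤ n)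
    (ha : 1 ≤ a) (hac : a ≤ c) (hck : c ≤ k) : F a j ≤ F c j := by
  rcases Nat.lt_or_ge a c with h | h
  · exact (fill_col_lt hF hj1 hjn ha h hck).le
  · have : a = c := by omega
    subst this; rfl

lemma fill_col_lt_iff (hF : IsFilling n k F) {j a c : ℕ} (hj1 : 1 ≤ j) (hjn : j ≤ n)
    (ha : 1 ≤ a) (hak : a ≤ k) (hc : 1 ≤ c) (hck : c ≤ k) :
    F a j < F c j ↔ a < c := by
  constructor
  · intro h
    by_contra hn
    push_neg at hn
    exact absurd (fill_col_le hF hj1 hjn hc hn hak) (by omega)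
  · intro h; exact fill_col_lt hF hj1 hjn ha h hck

lemma fill_col_le_iff (hF : IsFilling n k F) {j a c : ℕ} (hj1 : 1 ≤ j) (hjn : j ≤ n)
    (ha : 1 ≤ a) (hak : a ≤ k) (hc : 1 ≤ c) (hck : c ≤ k) :
    F a j ≤ F c j ↔ a ≤ c := by
  rw [← not_lt, ← not_lt (a := c)]
  exact not_congr (fill_col_lt_iff hF hj1 hjn hc hck ha hak)

lemma fill_inj (hF : IsFilling n k F) {a j c d : ℕ}
    (h1 : (a, j) ∈ grid k n) (h2 : (c, d) ∈ grid k n) (h : F a j = F c d) :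
    a = c ∧ j = d := by
  have m1 : ((a, j) : ℕ × ℕ) ∈ (Set.Icc 1 k ×ˢ Set.Icc 1 n : Set (ℕ × ℕ)) := by
    rw [← coe_grid]; exact_mod_cast h1
  have m2 : ((c, d) : ℕ × ℕ) ∈ (Set.Icc 1 k ×ˢ Set.Icc 1 n : Set (ℕ × ℕ)) := by
    rw [← coe_grid]; exact_mod_cast h2
  have := hF.2.1.injOn m1 m2 h
  exact ⟨congrArg Prod.fst this, congrArg Prod.snd this⟩

lemma fill_mem (hF : IsFilling n k F) {a j : ℕ} (h : (a, j) ∈ grid k n) :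
    1 ≤ F a j ∧ F a j ≤ k * n := by
  have := hF.2.1.mapsTo (by rw [← coe_grid]; exact_mod_cast h)
  simpa [Set.mem_Icc] using this

lemma fill_surj (hF : IsFilling n k F) {v : ℕ} (h1 : 1 ≤ v) (h2 : v ≤ k * n) :
    ∃ x ∈ grid k n, F x.1 x.2 = v := by
  rcases hF.2.1.surjOn (Set.mem_Icc.mpr ⟨h1, h2⟩) with ⟨x, hx, hxv⟩
  rw [← coe_grid] at hx
  exact ⟨x, by exact_mod_cast hx, hxv⟩



def bb (k : ℕ) (P : ℕ → ℕ → ℕ) (c : ℕ) : ℕ :=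
  ((Finset.Icc 1 k).filter (fun a => P a 1 < P c 2)).card

def Good (k : ℕ) (P : ℕ → ℕ → ℕ) (n : ℕ) (F : ℕ → ℕ → ℕ) : Prop :=
  IsFilling n k F ∧ ∀ i, 1 ≤ i → i ≤ n - 1 → MatchAt 2 k P F i

def Inv (k : ℕ) (P : ℕ → ℕ → ℕ) (n : ℕ) (F : ℕ → ℕ → ℕ) : Prop :=
  (∀ t, 1 ≤ t → t < k → (∃ c, 1 ≤ c ∧ c ≤ k ∧ bb k P c = t) →
      F (t + 1) n = F t n + 1) ∧ F k n = k * n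

section PFacts

variable {k : ℕ} {P : ℕ → ℕ → ℕ}

lemma bb_le (c : ℕ) : bb k P c ≤ k := by
  have h := Finset.card_le_card (Finset.filter_subset (fun a => P a 1 < P c 2) (Finset.Icc 1 k))
  simpa [bb] using h

lemma bb_mono (hP : IsFilling 2 k P) {c c' : ℕ} (hc : 1 ≤ c) (hcc : c ≤ c') (hck : c' ≤ k) :
    bb k P c ≤ bb k P c' := by
  apply Finset.card_le_card
  intro a ha
  simp only [Finset.mem_filter] at ha ⊢
  exact ⟨ha.1, lt_of_lt_of_le ha.2 (fill_col_le hP (by omega) (by omega) hc hcc hck)⟩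

lemma one_le_bb (hP : IsFilling 2 k P) (hstd : ∀ i, 1 ≤ i → i ≤ k → P i 1 < P i 2)
    {c : ℕ} (hc : 1 ≤ c) (hck : c ≤ k) (hk : 1 ≤ k) : 1 ≤ bb k P c := by
  have h1 : (1 : ℕ) ∈ (Finset.Icc 1 k).filter (fun a => P a 1 < P c 2) := by
    simp only [Finset.mem_filter, Finset.mem_Icc]
    refine ⟨⟨le_refl 1, hk⟩, ?_⟩
    calc P 1 1 ≤ P c 1 := fill_col_le hP (by omega) (by omega) (by omega) hc hck
    _ < P c 2 := hstd c hc hck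
  have := Finset.card_pos.mpr ⟨1, h1⟩
  simpa [bb] using this

lemma bb_k (hP : IsFilling 2 k P) (hstd : ∀ i, 1 ≤ i → i ≤ k → P i 1 < P i 2)
    (hk : 1 ≤ k) : bb k P k = k := by
  have : (Finset.Icc 1 k).filter (fun a => P a 1 < P k 2) = Finset.Icc 1 k := by
    apply Finset.filter_true_of_mem
    intro a ha
    simp only [Finset.mem_Icc] at ha
    calc P a 1 < P a 2 := hstd a ha.1 ha.2
    _ ≤ P k 2 := fill_col_le hP (by omega) (by omega) ha.1 ha.2 (le_refl k)
  simp [bb, this]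

lemma lt_iff_le_bb (hP : IsFilling 2 k P) {a c : ℕ}
    (ha : 1 ≤ a) (hak : a ≤ k) (hc : 1 ≤ c) (hck : c ≤ k) :
    P a 1 < P c 2 ↔ a ≤ bb k P c := by
  constructor
  · intro h
    have hsub : Finset.Icc 1 a ⊆ (Finset.Icc 1 k).filter (fun a' => P a' 1 < P c 2) := by
      intro a' ha'
      simp only [Finset.mem_Icc] at ha'
      simp only [Finset.mem_filter, Finset.mem_Icc]
      exact ⟨⟨ha'.1, le_trans ha'.2 hak⟩,
        lt_of_le_of_lt (fill_col_le hP (by omega) (by omega) ha'.1 ha'.2 hak) h⟩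
    have := Finset.card_le_card hsub
    simpa [bb] using this
  · intro h
    by_contra hn
    push_neg at hn
    have hne : P c 2 ≠ P a 1 := by
      intro he
      have := fill_inj hP (a := c) (j := 2) (c := a) (d := 1)
        (mem_grid.mpr ⟨⟨hc, hck⟩, by omega⟩) (mem_grid.mpr ⟨⟨ha, hak⟩, by omega⟩) he
      omega
    have hlt : P c 2 < P a 1 := by omega
    have hsub : (Finset.Icc 1 k).filter (fun a' => P a' 1 < P c 2) ⊆ Finset.Icc 1 (a - 1) := by
      intro a' ha'
      simp only [Finset.mem_filter, Finset.mem_Icc] at ha'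
      simp only [Finset.mem_Icc]
      refine ⟨ha'.1.1, ?_⟩
      by_contra hb
      push_neg at hb
      have : P a 1 ≤ P a' 1 := fill_col_le hP (by omega) (by omega) ha (by omega) ha'.1.2
      omega
    have := Finset.card_le_card hsub
    simp only [Nat.card_Icc] at this
    have : bb k P c ≤ a - 1 := by simpa [bb] using this
    omega

lemma good_cross {n : ℕ} {F : ℕ → ℕ → ℕ} (hG : Good k P n F) {i a c : ℕ}
    (hi : 1 ≤ i) (hin : i ≤ n - 1) (ha : 1 ≤ a) (hak : a ≤ k) (hc : 1 ≤ c) (hck : c ≤ k) :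
    (F a i < F c (i + 1) ↔ P a 1 < P c 2) := by
  have h := hG.2 i hi hin a 1 c 2 ha hak (by omega) (by omega) hc hck (by omega) (by omega)
  have e1 : i - 1 + 1 = i := by omega
  have e2 : i - 1 + 2 = i + 1 := by omega
  rwa [e1, e2] at h

lemma good_cross_bb (hP : IsFilling 2 k P) {n : ℕ} {F : ℕ → ℕ → ℕ}
    (hG : Good k P n F) {i a c : ℕ}
    (hi : 1 ≤ i) (hin : i ≤ n - 1) (ha : 1 ≤ a) (hak : a ≤ k) (hc : 1 ≤ c) (hck : c ≤ k) :
    (F a i < F c (i + 1) ↔ a ≤ bb k P c) := by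
  rw [good_cross hG hi hin ha hak hc hck]
  exact lt_iff_le_bb hP ha hak hc hck

lemma deg_bb (hP : IsFilling 2 k P)
    (hdeg : ∀ i, 1 ≤ i → i < k → P i 1 + 1 = P (i + 1) 1 ∨ P i 2 + 1 = P (i + 1) 2)
    {t : ℕ} (ht1 : 1 ≤ t) (htk : t < k)
    (hex : ∃ c, 1 ≤ c ∧ c ≤ k ∧ bb k P c = t) :
    bb k P (t + 1) = bb k P t := by
  obtain ⟨c, hc1, hck, hbc⟩ := hex
  have h1 : P t 1 < P c 2 := (lt_iff_le_bb hP ht1 (by omega) hc1 hck).mpr (by omega)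
  have h2 : ¬ P (t + 1) 1 < P c 2 := by
    intro h
    have := (lt_iff_le_bb hP (by omega) (by omega) hc1 hck).mp h
    omega
  have hne : P c 2 ≠ P (t + 1) 1 := by
    intro he
    have := fill_inj hP (a := c) (j := 2) (c := t + 1) (d := 1)
      (mem_grid.mpr ⟨⟨hc1, hck⟩, by omega⟩) (mem_grid.mpr ⟨⟨by omega, by omega⟩, by omega⟩) he
    omega
  have hgap : P t 1 + 2 ≤ P (t + 1) 1 := by omega
  have hright : P t 2 + 1 = P (t + 1) 2 := by
    rcases hdeg t ht1 htk with h | h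
    · omega
    · exact h
  unfold bb
  congr 1
  apply Finset.ext
  intro a
  simp only [Finset.mem_filter, Finset.mem_Icc]
  constructor
  · rintro ⟨h4, h5⟩
    refine ⟨h4, ?_⟩
    have h3 : P a 1 ≤ P t 2 := by omega
    have h6 : P a 1 ≠ P t 2 := by
      intro he
      have := fill_inj hP (a := a) (j := 1) (c := t) (d := 2)
        (mem_grid.mpr ⟨⟨h4.1, h4.2⟩, by omega⟩) (mem_grid.mpr ⟨⟨ht1, by omega⟩, by omega⟩) he
      omega
    omega
  · rintro ⟨h4, h5⟩
    exact ⟨h4, by omega⟩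

end PFacts


section Arith

lemma mul_lt_iff {m A B : ℕ} : (m + 1) * A < (m + 1) * B ↔ A < B := by
  constructor
  · intro h
    by_contra hn
    push_neg at hn
    exact absurd h (not_lt.mpr (Nat.mul_le_mul_left (m + 1) hn))
  · intro h
    have h1 : (m + 1) * (A + 1) ≤ (m + 1) * B := Nat.mul_le_mul_left (m + 1) h
    have h2 : (m + 1) * (A + 1) = (m + 1) * A + (m + 1) := Nat.mul_succ _ _
    linarith

lemma mul_le_iff {m A B : ℕ} : (m + 1) * A ≤ (m + 1) * B ↔ A ≤ B := by
  rw [← not_lt, ← not_lt, not_iff_not]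
  exact mul_lt_iff

lemma arith_on_le {m A B c : ℕ} (h1 : 1 ≤ c) (h2 : c ≤ m) :
    (m + 1) * A ≤ (m + 1) * B + c ↔ A ≤ B := by
  constructor
  · intro h
    by_contra hn
    push_neg at hn
    have h3 : (m + 1) * (B + 1) ≤ (m + 1) * A := Nat.mul_le_mul_left (m + 1) hn
    have h4 : (m + 1) * (B + 1) = (m + 1) * B + (m + 1) := Nat.mul_succ _ _
    linarith
  · intro h
    have h3 : (m + 1) * A ≤ (m + 1) * B := Nat.mul_le_mul_left (m + 1) h
    linarith

lemma arith_on_lt {m A B c : ℕ} (h1 : 1 ≤ c) (h2 : c ≤ m) :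
    (m + 1) * A < (m + 1) * B + c ↔ A ≤ B := by
  constructor
  · intro h
    exact (arith_on_le h1 h2).mp h.le
  · intro h
    have h3 : (m + 1) * A ≤ (m + 1) * B := Nat.mul_le_mul_left (m + 1) h
    linarith

lemma arith_no_le {m A B c : ℕ} (h1 : 1 ≤ c) (h2 : c ≤ m) :
    (m + 1) * B + c ≤ (m + 1) * A ↔ B < A := by
  constructor
  · intro h
    by_contra hn
    push_neg at hn
    have h3 : (m + 1) * A ≤ (m + 1) * B := Nat.mul_le_mul_left (m + 1) hn
    linarith
  · intro h
    have h3 : (m + 1) * (B + 1) ≤ (m + 1) * A := Nat.mul_le_mul_left (m + 1) h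
    have h4 : (m + 1) * (B + 1) = (m + 1) * B + (m + 1) := Nat.mul_succ _ _
    linarith

lemma arith_no_lt {m A B c : ℕ} (h1 : 1 ≤ c) (h2 : c ≤ m) :
    (m + 1) * B + c < (m + 1) * A ↔ B < A := by
  constructor
  · intro h
    exact (arith_no_le h1 h2).mp h.le
  · intro h
    have h3 : (m + 1) * (B + 1) ≤ (m + 1) * A := Nat.mul_le_mul_left (m + 1) h
    have h4 : (m + 1) * (B + 1) = (m + 1) * B + (m + 1) := Nat.mul_succ _ _
    linarith

lemma arith_nn_le {m B B' c c' : ℕ} (h1 : 1 ≤ c) (h2 : c ≤ m) (h1' : 1 ≤ c') (h2' : c' ≤ m) :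
    (m + 1) * B + c ≤ (m + 1) * B' + c' ↔ (B < B' ∨ (B = B' ∧ c ≤ c')) := by
  constructor
  · intro h
    rcases lt_trichotomy B B' with h3 | h3 | h3
    · exact Or.inl h3
    · exact Or.inr ⟨h3, by subst h3; omega⟩
    · exfalso
      have h4 : (m + 1) * (B' + 1) ≤ (m + 1) * B := Nat.mul_le_mul_left (m + 1) h3
      have h5 : (m + 1) * (B' + 1) = (m + 1) * B' + (m + 1) := Nat.mul_succ _ _
      linarith
  · rintro (h3 | ⟨h3, h4⟩)
    · have h4 : (m + 1) * (B + 1) ≤ (m + 1) * B' := Nat.mul_le_mul_left (m + 1) h3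
      have h5 : (m + 1) * (B + 1) = (m + 1) * B + (m + 1) := Nat.mul_succ _ _
      linarith
    · subst h3; omega

lemma arith_nn_lt {m B B' c c' : ℕ} (h1 : 1 ≤ c) (h2 : c ≤ m) (h1' : 1 ≤ c') (h2' : c' ≤ m) :
    (m + 1) * B + c < (m + 1) * B' + c' ↔ (B < B' ∨ (B = B' ∧ c < c')) := by
  constructor
  · intro h
    rcases lt_trichotomy B B' with h3 | h3 | h3
    · exact Or.inl h3
    · exact Or.inr ⟨h3, by subst h3; omega⟩
    · exfalso
      have h4 : (m + 1) * (B' + 1) ≤ (m + 1) * B := Nat.mul_le_mul_left (m + 1) h3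
      have h5 : (m + 1) * (B' + 1) = (m + 1) * B' + (m + 1) := Nat.mul_succ _ _
      linarith
  · rintro (h3 | ⟨h3, h4⟩)
    · have h4 : (m + 1) * (B + 1) ≤ (m + 1) * B' := Nat.mul_le_mul_left (m + 1) h3
      have h5 : (m + 1) * (B + 1) = (m + 1) * B + (m + 1) := Nat.mul_succ _ _
      linarith
    · subst h3; omega

end Arith

lemma grid_succ (k n : ℕ) :
    grid k (n + 1) = grid k n ∪ Finset.Icc 1 k ×ˢ Finset.Icc (n + 1) (n + 1) := by
  apply Finset.ext
  intro x
  simp only [Finset.mem_union, Finset.mem_product, Finset.mem_Icc, grid]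
  omega

lemma grid_split (k n : ℕ) (p : ℕ × ℕ → Prop) [DecidablePred p] :
    ((grid k (n + 1)).filter p).card
      = ((grid k n).filter p).card + ((Finset.Icc 1 k).filter (fun c => p (c, n + 1))).card := by
  rw [grid_succ, Finset.filter_union]
  rw [Finset.card_union_of_disjoint]
  · congr 1
    apply Finset.card_bij (fun y _ => y.1)
    · intro y hy
      simp only [Finset.mem_filter, Finset.mem_product, Finset.mem_Icc] at hy ⊢
      have he : y = (y.1, n + 1) := by
        have : y.2 = n + 1 := by omega
        exact Prod.ext rfl this
      refine ⟨⟨hy.1.1.1, hy.1.1.2⟩, ?_⟩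
      rw [← he]; exact hy.2
    · intro y hy z hz h
      simp only [Finset.mem_filter, Finset.mem_product, Finset.mem_Icc] at hy hz
      have : y.2 = z.2 := by omega
      exact Prod.ext h this
    · intro c hc
      simp only [Finset.mem_filter, Finset.mem_Icc] at hc
      exact ⟨(c, n + 1), by
        simp only [Finset.mem_filter, Finset.mem_product, Finset.mem_Icc]
        exact ⟨⟨⟨hc.1.1, hc.1.2⟩, ⟨le_refl _, le_refl _⟩⟩, hc.2⟩, rfl⟩
  · rw [Finset.disjoint_left]
    intro x hx hx'
    simp only [Finset.mem_filter, Finset.mem_product, Finset.mem_Icc, grid] at hx hx'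
    omega



def stepK (k : ℕ) (P : ℕ → ℕ → ℕ) (n : ℕ) (H : ℕ → ℕ → ℕ) : ℕ × ℕ → ℕ :=
  fun x => if x.2 ≤ n then (k + 1) * H x.1 x.2 else (k + 1) * H (bb k P x.1) n + x.1

def stepF (k : ℕ) (P : ℕ → ℕ → ℕ) (n : ℕ) (H : ℕ → ℕ → ℕ) : ℕ → ℕ → ℕ :=
  fun i j => if (i, j) ∈ grid k (n + 1) then rk (grid k (n + 1)) (stepK k P n H) (i, j) else 0

def ncv (k : ℕ) (P : ℕ → ℕ → ℕ) (n : ℕ) (H : ℕ → ℕ → ℕ) (v : ℕ) : ℕ :=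
  ((Finset.Icc 1 k).filter (fun c => H (bb k P c) n < v)).card

section StepLemmas

variable {k n : ℕ} {P H : ℕ → ℕ → ℕ}

lemma bbg (hP : IsFilling 2 k P) (hstd : ∀ i, 1 ≤ i → i ≤ k → P i 1 < P i 2)
    (hk : 1 ≤ k) {c : ℕ} (hc : 1 ≤ c) (hck : c ≤ k) (hn : 1 ≤ n) :
    (bb k P c, n) ∈ grid k n :=
  mem_grid.mpr ⟨⟨one_le_bb hP hstd hc hck hk, bb_le c⟩, ⟨hn, le_refl n⟩⟩

lemma stepK_injOn (hP : IsFilling 2 k P) (hstd : ∀ i, 1 ≤ i → i ≤ k → P i 1 < P i 2)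
    (hk : 1 ≤ k) (hn : 1 ≤ n) (hgood : Good k P n H) :
    Set.InjOn (stepK k P n H) ↑(grid k (n + 1)) := by
  intro x hx y hy hxy
  have hx' := mem_grid.mp (Finset.mem_coe.mp hx)
  have hy' := mem_grid.mp (Finset.mem_coe.mp hy)
  by_cases hxo : x.2 ≤ n <;> by_cases hyo : y.2 ≤ n <;>
    simp only [stepK, hxo, hyo, if_pos, if_neg, if_true, if_false] at hxy
  · -- both old
    have hH : H x.1 x.2 = H y.1 y.2 := by
      have := mul_le_iff (m := k) (A := H x.1 x.2) (B := H y.1 y.2)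
      have := mul_le_iff (m := k) (A := H y.1 y.2) (B := H x.1 x.2)
      omega
    have := fill_inj hgood.1 (a := x.1) (j := x.2) (c := y.1) (d := y.2)
      (mem_grid.mpr ⟨hx'.1, ⟨hx'.2.1, hxo⟩⟩) (mem_grid.mpr ⟨hy'.1, ⟨hy'.2.1, hyo⟩⟩) hH
    exact Prod.ext this.1 this.2
  · exfalso
    have h1 := (arith_on_le (m := k) (A := H x.1 x.2) (B := H (bb k P y.1) n)
      hy'.1.1 hy'.1.2).mp (le_of_eq hxy)
    have h2 := (arith_no_le (m := k) (A := H x.1 x.2) (B := H (bb k P y.1) n)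
      hy'.1.1 hy'.1.2).mp (le_of_eq hxy.symm)
    omega
  · exfalso
    have h1 := (arith_on_le (m := k) (A := H y.1 y.2) (B := H (bb k P x.1) n)
      hx'.1.1 hx'.1.2).mp (le_of_eq hxy.symm)
    have h2 := (arith_no_le (m := k) (A := H y.1 y.2) (B := H (bb k P x.1) n)
      hx'.1.1 hx'.1.2).mp (le_of_eq hxy)
    omega
  · -- both new
    have h1 := (arith_nn_le hx'.1.1 hx'.1.2 hy'.1.1 hy'.1.2).mp (le_of_eq hxy)
    have h2 := (arith_nn_le hy'.1.1 hy'.1.2 hx'.1.1 hx'.1.2).mp (le_of_eq hxy.symm)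
    have : x.1 = y.1 := by omega
    have h2 : x.2 = y.2 := by omega
    exact Prod.ext this h2

lemma stepF_eq (hmem : (i, j) ∈ grid k (n + 1)) :
    stepF k P n H i j = rk (grid k (n + 1)) (stepK k P n H) (i, j) := by
  simp only [stepF, if_pos hmem]

lemma stepF_lt_iff (hP : IsFilling 2 k P) (hstd : ∀ i, 1 ≤ i → i ≤ k → P i 1 < P i 2)
    (hk : 1 ≤ k) (hn : 1 ≤ n) (hgood : Good k P n H)
    {i j i' j' : ℕ} (h1 : (i, j) ∈ grid k (n + 1)) (h2 : (i', j') ∈ grid k (n + 1)) :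
    stepF k P n H i j < stepF k P n H i' j' ↔
      stepK k P n H (i, j) < stepK k P n H (i', j') := by
  rw [stepF_eq h1, stepF_eq h2]
  exact rk_lt_iff h1 h2

lemma stepF_new_val (hP : IsFilling 2 k P) (hstd : ∀ i, 1 ≤ i → i ≤ k → P i 1 < P i 2)
    (hk : 1 ≤ k) (hn : 1 ≤ n) (hgood : Good k P n H)
    {c : ℕ} (hc1 : 1 ≤ c) (hck : c ≤ k) :
    stepF k P n H c (n + 1) = H (bb k P c) n + c := by
  have hmem : (c, n + 1) ∈ grid k (n + 1) := mem_grid.mpr ⟨⟨hc1, hck⟩, by omega⟩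
  have hKc : stepK k P n H (c, n + 1) = (k + 1) * H (bb k P c) n + c := by
    simp [stepK]
  rw [stepF_eq hmem]
  unfold rk
  rw [grid_split k n (fun y => stepK k P n H y ≤ stepK k P n H (c, n + 1))]
  have hold : ((grid k n).filter
      (fun y => stepK k P n H y ≤ stepK k P n H (c, n + 1))).card = H (bb k P c) n := by
    have he : (grid k n).filter (fun y => stepK k P n H y ≤ stepK k P n H (c, n + 1))
        = (grid k n).filter (fun y => H y.1 y.2 ≤ H (bb k P c) n) := by
      apply Finset.filter_congr
      intro y hy
      have hy2 : y.2 ≤ n := (mem_grid.mp hy).2.2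
      simp only [stepK, if_pos hy2]
      rw [if_neg (by omega : ¬ n + 1 ≤ n)]
      exact arith_on_le hc1 hck
    rw [he]
    apply card_filter_le_of_bijOn (isFilling_bijOn_grid hgood.1)
    rw [grid_card]
    exact (fill_mem hgood.1 (bbg hP hstd hk hc1 hck hn)).2
  have hnew : ((Finset.Icc 1 k).filter
      (fun c' => stepK k P n H (c', n + 1) ≤ stepK k P n H (c, n + 1))).card = c := by
    have he : (Finset.Icc 1 k).filter
        (fun c' => stepK k P n H (c', n + 1) ≤ stepK k P n H (c, n + 1))
        = Finset.Icc 1 c := by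
      apply Finset.ext
      intro c'
      simp only [Finset.mem_filter, Finset.mem_Icc]
      constructor
      · rintro ⟨⟨hc'1, hc'k⟩, hle⟩
        refine ⟨hc'1, ?_⟩
        have hKc' : stepK k P n H (c', n + 1) = (k + 1) * H (bb k P c') n + c' := by
          simp [stepK]
        rw [hKc', hKc] at hle
        have := (arith_nn_le hc'1 hc'k hc1 hck).mp hle
        rcases this with h | h
        · by_contra hcc
          push_neg at hcc
          have hb : bb k P c ≤ bb k P c' := bb_mono hP hc1 (by omega) hc'k
          have := fill_col_le hgood.1 hn (le_refl n)
            (one_le_bb hP hstd hc1 hck hk) hb (bb_le c')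
          omega
        · exact h.2
      · rintro ⟨hc'1, hc'c⟩
        have hc'k : c' ≤ k := le_trans hc'c hck
        refine ⟨⟨hc'1, hc'k⟩, ?_⟩
        have hKc' : stepK k P n H (c', n + 1) = (k + 1) * H (bb k P c') n + c' := by
          simp [stepK]
        rw [hKc', hKc]
        apply (arith_nn_le hc'1 hc'k hc1 hck).mpr
        have hb : bb k P c' ≤ bb k P c := bb_mono hP hc'1 hc'c hck
        have hHb := fill_col_le hgood.1 hn (le_refl n)
          (one_le_bb hP hstd hc'1 hc'k hk) hb (bb_le c)
        rcases lt_or_eq_of_le hHb with h | h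
        · exact Or.inl h
        · exact Or.inr ⟨h, hc'c⟩
    rw [he]
    simp
  rw [hold, hnew]

lemma stepF_old_val (hP : IsFilling 2 k P) (hstd : ∀ i, 1 ≤ i → i ≤ k → P i 1 < P i 2)
    (hk : 1 ≤ k) (hn : 1 ≤ n) (hgood : Good k P n H)
    {i j : ℕ} (hmem : (i, j) ∈ grid k n) :
    stepF k P n H i j = H i j + ncv k P n H (H i j) := by
  have hmem' : (i, j) ∈ grid k (n + 1) := by
    have := mem_grid.mp hmem
    exact mem_grid.mpr ⟨this.1, by omega⟩
  have hKx : stepK k P n H (i, j) = (k + 1) * H i j := by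
    have : (i, j).2 ≤ n := (mem_grid.mp hmem).2.2
    simp [stepK, this]
  rw [stepF_eq hmem']
  unfold rk
  rw [grid_split k n (fun y => stepK k P n H y ≤ stepK k P n H (i, j))]
  have hold : ((grid k n).filter
      (fun y => stepK k P n H y ≤ stepK k P n H (i, j))).card = H i j := by
    have he : (grid k n).filter (fun y => stepK k P n H y ≤ stepK k P n H (i, j))
        = (grid k n).filter (fun y => H y.1 y.2 ≤ H i j) := by
      apply Finset.filter_congr
      intro y hy
      have hy2 : y.2 ≤ n := (mem_grid.mp hy).2.2
      have hjn : j ≤ n := (mem_grid.mp hmem).2.2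
      simp only [stepK, if_pos hy2]
      rw [if_pos hjn]
      exact mul_le_iff
    rw [he]
    apply card_filter_le_of_bijOn (isFilling_bijOn_grid hgood.1)
    rw [grid_card]
    exact (fill_mem hgood.1 hmem).2
  have hnew : ((Finset.Icc 1 k).filter
      (fun c => stepK k P n H (c, n + 1) ≤ stepK k P n H (i, j))).card
      = ncv k P n H (H i j) := by
    unfold ncv
    congr 1
    apply Finset.filter_congr
    intro c hc
    simp only [Finset.mem_Icc] at hc
    have hKc' : stepK k P n H (c, n + 1) = (k + 1) * H (bb k P c) n + c := by
      simp [stepK]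
    rw [hKc', hKx]
    exact arith_no_le hc.1 hc.2
  rw [hold, hnew]

lemma stepK_oldv {a j : ℕ} (h : j ≤ n) : stepK k P n H (a, j) = (k + 1) * H a j := by
  simp [stepK, h]

lemma stepK_newv {a : ℕ} : stepK k P n H (a, n + 1) = (k + 1) * H (bb k P a) n + a := by
  simp [stepK]

lemma mem_gr {a j m : ℕ} (h1 : 1 ≤ a) (h2 : a ≤ k) (h3 : 1 ≤ j) (h4 : j ≤ m) :
    (a, j) ∈ grid k m := mem_grid.mpr ⟨⟨h1, h2⟩, ⟨h3, h4⟩⟩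

lemma stepF_good (hP : IsFilling 2 k P) (hstd : ∀ i, 1 ≤ i → i ≤ k → P i 1 < P i 2)
    (hk : 1 ≤ k) (hn : 1 ≤ n) (hgood : Good k P n H) :
    Good k P (n + 1) (stepF k P n H) := by
  have hinj := stepK_injOn hP hstd hk hn hgood
  constructor
  · refine ⟨?_, ?_, ?_⟩
    · intro i j hne
      by_cases hm : (i, j) ∈ grid k (n + 1)
      · have := mem_grid.mp hm
        exact ⟨this.1.1, this.1.2, this.2.1, this.2.2⟩
      · simp only [stepF, if_neg hm] at hne
        exact absurd rfl hne
    · have hb := rk_bijOn (S := grid k (n + 1)) (K := stepK k P n H) hinj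
      have heq : Set.EqOn (rk (grid k (n + 1)) (stepK k P n H))
          (fun p : ℕ × ℕ => stepF k P n H p.1 p.2) ↑(grid k (n + 1)) := by
        intro p hp
        have hp' : (p.1, p.2) ∈ grid k (n + 1) := by
          rw [Prod.mk.eta]; exact Finset.mem_coe.mp hp
        simp only [stepF, if_pos hp', Prod.mk.eta]
      have hres := hb.congr heq
      rw [coe_grid, grid_card] at hres
      exact hres
    · intro a j ha hak hj1 hjn
      have hm1 : (a, j) ∈ grid k (n + 1) := mem_gr ha (by omega) hj1 hjn
      have hm2 : (a + 1, j) ∈ grid k (n + 1) := mem_gr (by omega) (by omega) hj1 hjn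
      rw [stepF_lt_iff hP hstd hk hn hgood hm1 hm2]
      by_cases hj : j ≤ n
      · rw [stepK_oldv hj, stepK_oldv hj]
        exact mul_lt_iff.mpr (fill_col_lt hgood.1 hj1 hj ha (by omega) (by omega))
      · have hj' : j = n + 1 := by omega
        subst hj'
        rw [stepK_newv, stepK_newv]
        apply (arith_nn_lt ha (by omega) (by omega) (by omega)).mpr
        have hbm : bb k P a ≤ bb k P (a + 1) := bb_mono hP ha (by omega) (by omega)
        have hHm := fill_col_le hgood.1 hn (le_refl n)
          (one_le_bb hP hstd ha (by omega) hk) hbm (bb_le (a + 1))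
        rcases lt_or_eq_of_le hHm with h | h
        · exact Or.inl h
        · exact Or.inr ⟨h, by omega⟩
  · intro i hi1 hin
    intro a b c d ha hak hb1 hb2 hc hck hd1 hd2
    have hin' : i ≤ n := by omega
    have hm1 : (a, i - 1 + b) ∈ grid k (n + 1) := mem_gr ha hak (by omega) (by omega)
    have hm2 : (c, i - 1 + d) ∈ grid k (n + 1) := mem_gr hc hck (by omega) (by omega)
    rw [stepF_lt_iff hP hstd hk hn hgood hm1 hm2]
    by_cases hlast : i ≤ n - 1
    · have hbn : i - 1 + b ≤ n := by omega
      have hdn : i - 1 + d ≤ n := by omega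
      rw [stepK_oldv hbn, stepK_oldv hdn, mul_lt_iff]
      exact hgood.2 i hi1 hlast a b c d ha hak hb1 hb2 hc hck hd1 hd2
    · have hieq : i = n := by omega
      have e1 : i - 1 + 1 = i := by omega
      have e2 : i - 1 + 2 = n + 1 := by omega
      have hile : i ≤ n := by omega
      have hbd : (b = 1 ∨ b = 2) ∧ (d = 1 ∨ d = 2) := by omega
      rcases hbd.1 with hb' | hb' <;> rcases hbd.2 with hd' | hd' <;>
        subst hb' <;> subst hd'
      · rw [e1, stepK_oldv hile, stepK_oldv hile, mul_lt_iff]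
        rw [fill_col_lt_iff hgood.1 (by omega) hile ha hak hc hck]
        exact (fill_col_lt_iff hP (by omega) (by omega) ha hak hc hck).symm
      · rw [e1, e2, stepK_oldv hile, stepK_newv]
        rw [hieq]
        rw [arith_on_lt hc hck]
        rw [fill_col_le_iff hgood.1 hn (le_refl n) ha hak
          (one_le_bb hP hstd hc hck hk) (bb_le c)]
        exact (lt_iff_le_bb hP ha hak hc hck).symm
      · rw [e1, e2, stepK_newv, stepK_oldv hile]
        rw [hieq]
        rw [arith_no_lt ha hak]
        rw [fill_col_lt_iff hgood.1 hn (le_refl n)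
          (one_le_bb hP hstd ha hak hk) (bb_le a) hc hck]
        constructor
        · intro h
          have h2 : ¬ (c ≤ bb k P a) := by omega
          have h3 : ¬ P c 1 < P a 2 := fun hcon => h2 ((lt_iff_le_bb hP hc hck ha hak).mp hcon)
          have hne : P a 2 ≠ P c 1 := by
            intro he
            have := fill_inj hP (a := a) (j := 2) (c := c) (d := 1)
              (mem_gr ha hak (by omega) (by omega)) (mem_gr hc hck (by omega) (by omega)) he
            omega
          omega
        · intro h
          by_contra h2
          push_neg at h2
          have h3 : c ≤ bb k P a := by omega
          have := (lt_iff_le_bb hP hc hck ha hak).mpr h3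
          omega
      · rw [e2, stepK_newv, stepK_newv]
        rw [arith_nn_lt ha hak hc hck]
        rw [← fill_col_lt_iff hP (j := 2) (by omega) (by omega) ha hak hc hck]
        have hiff : a < c ↔ (H (bb k P a) n < H (bb k P c) n ∨
            (H (bb k P a) n = H (bb k P c) n ∧ a < c)) := by
          constructor
          · intro h
            have hbm : bb k P a ≤ bb k P c := bb_mono hP ha h.le hck
            have hHm := fill_col_le hgood.1 hn (le_refl n)
              (one_le_bb hP hstd ha hak hk) hbm (bb_le c)
            rcases lt_or_eq_of_le hHm with h' | h'
            · exact Or.inl h'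
            · exact Or.inr ⟨h', h⟩
          · rintro (h | ⟨_, h⟩)
            · by_contra h2
              push_neg at h2
              have hbm : bb k P c ≤ bb k P a := bb_mono hP hc h2 hak
              have hHm := fill_col_le hgood.1 hn (le_refl n)
                (one_le_bb hP hstd hc hck hk) hbm (bb_le a)
              omega
            · exact h
        rw [fill_col_lt_iff hP (j := 2) (by omega) (by omega) ha hak hc hck]
        exact hiff.symm

lemma stepF_inv (hP : IsFilling 2 k P) (hstd : ∀ i, 1 ≤ i → i ≤ k → P i 1 < P i 2)
    (hk : 1 ≤ k) (hn : 1 ≤ n) (hgood : Good k P n H) (hinv : Inv k P n H)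
    (hdegb : ∀ t, 1 ≤ t → t < k → (∃ c, 1 ≤ c ∧ c ≤ k ∧ bb k P c = t) →
      bb k P (t + 1) = bb k P t) :
    Inv k P (n + 1) (stepF k P n H) := by
  constructor
  · intro t ht1 htk hex
    rw [stepF_new_val hP hstd hk hn hgood (by omega) (by omega),
      stepF_new_val hP hstd hk hn hgood ht1 (by omega)]
    rw [hdegb t ht1 htk hex]
    omega
  · rw [stepF_new_val hP hstd hk hn hgood hk (le_refl k)]
    rw [bb_k hP hstd hk, hinv.2]
    ring

def stdz (k n : ℕ) (G : ℕ → ℕ → ℕ) : ℕ → ℕ → ℕ :=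
  fun i j => if (i, j) ∈ grid k n then rk (grid k n) (fun y => G y.1 y.2) (i, j) else 0

lemma grid_mono {m : ℕ} (h : (x : ℕ × ℕ) ∈ grid k n) (hm : n ≤ m) : x ∈ grid k m := by
  have := mem_grid.mp h
  exact mem_grid.mpr ⟨this.1, ⟨this.2.1, le_trans this.2.2 hm⟩⟩

lemma stdz_good (hG : Good k P (n + 1) G) : Good k P n (stdz k n G) := by
  have hGfill := hG.1
  have hsub : (grid k n : Set (ℕ × ℕ)) ⊆ ↑(grid k (n + 1)) := by
    intro x hx
    exact Finset.mem_coe.mpr (grid_mono (Finset.mem_coe.mp hx) (by omega))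
  have hinjG : Set.InjOn (fun p : ℕ × ℕ => G p.1 p.2) ↑(grid k n) :=
    Set.InjOn.mono hsub (isFilling_bijOn_grid hGfill).injOn
  constructor
  · refine ⟨?_, ?_, ?_⟩
    · intro i j hne
      by_cases hm : (i, j) ∈ grid k n
      · have := mem_grid.mp hm
        exact ⟨this.1.1, this.1.2, this.2.1, this.2.2⟩
      · simp only [stdz, if_neg hm] at hne
        exact absurd rfl hne
    · have hb := rk_bijOn (S := grid k n) (K := fun y : ℕ × ℕ => G y.1 y.2) hinjG
      have heq : Set.EqOn (rk (grid k n) (fun y : ℕ × ℕ => G y.1 y.2))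
          (fun p : ℕ × ℕ => stdz k n G p.1 p.2) ↑(grid k n) := by
        intro p hp
        have hp' : (p.1, p.2) ∈ grid k n := by
          rw [Prod.mk.eta]; exact Finset.mem_coe.mp hp
        simp only [stdz, if_pos hp', Prod.mk.eta]
      have hres := hb.congr heq
      rw [coe_grid, grid_card] at hres
      exact hres
    · intro a j ha hak hj1 hjn
      have hm1 : (a, j) ∈ grid k n := mem_gr ha (by omega) hj1 hjn
      have hm2 : (a + 1, j) ∈ grid k n := mem_gr (by omega) (by omega) hj1 hjn
      simp only [stdz, if_pos hm1, if_pos hm2]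
      exact rk_lt_of_lt hm2 (hGfill.2.2 a j ha hak hj1 (by omega))
  · intro i hi1 hin a b c d ha hak hb1 hb2 hc hck hd1 hd2
    have hm1 : (a, i - 1 + b) ∈ grid k n := mem_gr ha hak (by omega) (by omega)
    have hm2 : (c, i - 1 + d) ∈ grid k n := mem_gr hc hck (by omega) (by omega)
    simp only [stdz, if_pos hm1, if_pos hm2]
    rw [rk_lt_iff hm1 hm2]
    exact hG.2 i hi1 (by omega) a b c d ha hak hb1 hb2 hc hck hd1 hd2

lemma step_unique (hP : IsFilling 2 k P) (hstd : ∀ i, 1 ≤ i → i ≤ k → P i 1 < P i 2)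
    (hk : 1 ≤ k) (hn : 1 ≤ n)
    (hgood : Good k P n H) (hinv : Inv k P n H)
    (huniq : ∀ G', Good k P n G' → G' = H)
    {G : ℕ → ℕ → ℕ} (hG : Good k P (n + 1) G) :
    G = stepF k P n H := by
  have hGfill := hG.1
  have hbijG := isFilling_bijOn_grid hGfill
  have hstdH : stdz k n G = H := huniq _ (stdz_good hG)
  have hval : ∀ {i j : ℕ}, (i, j) ∈ grid k n →
      rk (grid k n) (fun y : ℕ × ℕ => G y.1 y.2) (i, j) = H i j := by
    intro i j hm
    have := congrFun (congrFun hstdH i) j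
    simpa [stdz, if_pos hm] using this
  have hiso_lt : ∀ {x y : ℕ × ℕ}, x ∈ grid k n → y ∈ grid k n →
      (H x.1 x.2 < H y.1 y.2 ↔ G x.1 x.2 < G y.1 y.2) := by
    intro x y hx hy
    rw [← hval (i := x.1) (j := x.2) (by rwa [Prod.mk.eta]),
      ← hval (i := y.1) (j := y.2) (by rwa [Prod.mk.eta])]
    rw [Prod.mk.eta, Prod.mk.eta]
    exact rk_lt_iff hx hy
  have hiso_le : ∀ {x y : ℕ × ℕ}, x ∈ grid k n → y ∈ grid k n →
      (H x.1 x.2 ≤ H y.1 y.2 ↔ G x.1 x.2 ≤ G y.1 y.2) := by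
    intro x y hx hy
    rw [← not_lt, ← not_lt]
    exact not_congr (hiso_lt hy hx)
  have hcross : ∀ {a c : ℕ}, 1 ≤ a → a ≤ k → 1 ≤ c → c ≤ k →
      (G a n < G c (n + 1) ↔ a ≤ bb k P c) :=
    fun ha hak hc hck => good_cross_bb hP hG hn (by omega) ha hak hc hck
  -- the separating facts
  have hsep : ∀ {c : ℕ}, 1 ≤ c → c ≤ k → ∀ {y : ℕ × ℕ}, y ∈ grid k n →
      (G y.1 y.2 ≤ G c (n + 1) ↔ H y.1 y.2 ≤ H (bb k P c) n) := by
    intro c hc1 hck y hy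
    have hbm := bbg hP hstd hk hc1 hck hn
    have hbble : bb k P c ≤ k := bb_le c
    constructor
    · intro hle
      by_contra hcon
      push_neg at hcon
      by_cases hbk : bb k P c = k
      · have h1 : H (bb k P c) n = k * n := by rw [hbk]; exact hinv.2
        have h2 := (fill_mem hgood.1 hy).2
        have h3 : H y.1 y.2 ≤ H (bb k P c) n := by rw [h1]; exact h2
        omega
      · have ht1 : 1 ≤ bb k P c := one_le_bb hP hstd hc1 hck hk
        have hgap : H (bb k P c + 1) n = H (bb k P c) n + 1 :=
          hinv.1 (bb k P c) ht1 (by omega) ⟨c, hc1, hck, rfl⟩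
        have h2 : H (bb k P c + 1) n ≤ H y.1 y.2 := by omega
        have hm1 : (bb k P c + 1, n) ∈ grid k n := mem_gr (by omega) (by omega) hn (le_refl n)
        have h3 : G (bb k P c + 1) n ≤ G y.1 y.2 := (hiso_le hm1 hy).mp h2
        have h4 : ¬ (G (bb k P c + 1) n < G c (n + 1)) := by
          rw [hcross (by omega) (by omega) hc1 hck]
          omega
        have h5 : G c (n + 1) ≠ G (bb k P c + 1) n := by
          intro he
          have := fill_inj hGfill (a := c) (j := n + 1) (c := bb k P c + 1) (d := n)
            (mem_gr hc1 hck (by omega) (by omega))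
            (grid_mono hm1 (by omega)) he
          omega
        omega
    · intro hle
      have h1 : G y.1 y.2 ≤ G (bb k P c) n := (hiso_le hy hbm).mp hle
      have h2 : G (bb k P c) n < G c (n + 1) :=
        (hcross (one_le_bb hP hstd hc1 hck hk) (bb_le c) hc1 hck).mpr (le_refl _)
      omega
  have hnewsep : ∀ {c : ℕ}, 1 ≤ c → c ≤ k → ∀ {y : ℕ × ℕ}, y ∈ grid k n →
      (G c (n + 1) ≤ G y.1 y.2 ↔ H (bb k P c) n < H y.1 y.2) := by
    intro c hc1 hck y hy
    constructor
    · intro hle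
      by_contra hcon
      push_neg at hcon
      have := (hsep hc1 hck hy).mpr hcon
      have hne : G y.1 y.2 ≠ G c (n + 1) := by
        intro he
        have hy' := mem_grid.mp hy
        have := fill_inj hGfill (a := y.1) (j := y.2) (c := c) (d := n + 1)
          (grid_mono (by rwa [Prod.mk.eta]) (by omega)) (mem_gr hc1 hck (by omega) (by omega)) he
        omega
      omega
    · intro hlt
      have := (hsep hc1 hck hy).not.mpr (by omega)
      push_neg at this
      exact this.le
  -- value of the new column
  have hnewval : ∀ {c : ℕ}, 1 ≤ c → c ≤ k → G c (n + 1) = H (bb k P c) n + c := by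
    intro c hc1 hck
    have hm' : (c, n + 1) ∈ grid k (n + 1) := mem_gr hc1 hck (by omega) (by omega)
    have hv : G c (n + 1) =
        ((grid k (n + 1)).filter (fun y => G y.1 y.2 ≤ G c (n + 1))).card :=
      value_eq_rank hbijG hm'
    rw [grid_split k n (fun y => G y.1 y.2 ≤ G c (n + 1))] at hv
    have hOld : ((grid k n).filter (fun y => G y.1 y.2 ≤ G c (n + 1))).card
        = H (bb k P c) n := by
      have he : (grid k n).filter (fun y => G y.1 y.2 ≤ G c (n + 1))
          = (grid k n).filter (fun y => H y.1 y.2 ≤ H (bb k P c) n) := by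
        apply Finset.filter_congr
        intro y hy
        exact hsep hc1 hck hy
      rw [he]
      apply card_filter_le_of_bijOn (isFilling_bijOn_grid hgood.1)
      rw [grid_card]
      exact (fill_mem hgood.1 (bbg hP hstd hk hc1 hck hn)).2
    have hNew : ((Finset.Icc 1 k).filter (fun c' => G c' (n + 1) ≤ G c (n + 1))).card
        = c := by
      have he : (Finset.Icc 1 k).filter (fun c' => G c' (n + 1) ≤ G c (n + 1))
          = Finset.Icc 1 c := by
        apply Finset.ext
        intro c'
        simp only [Finset.mem_filter, Finset.mem_Icc]
        constructor
        · rintro ⟨⟨h1, h2⟩, h3⟩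
          exact ⟨h1, (fill_col_le_iff hGfill (by omega) (le_refl (n + 1)) h1 h2 hc1 hck).mp h3⟩
        · rintro ⟨h1, h2⟩
          refine ⟨⟨h1, le_trans h2 hck⟩, ?_⟩
          exact (fill_col_le_iff hGfill (by omega) (le_refl (n + 1)) h1 (le_trans h2 hck) hc1 hck).mpr h2
      rw [he]
      simp
    rw [hOld, hNew] at hv
    exact hv
  -- value of old cells
  have holdval : ∀ {i j : ℕ}, (i, j) ∈ grid k n →
      G i j = H i j + ncv k P n H (H i j) := by
    intro i j hm
    have hm' : (i, j) ∈ grid k (n + 1) := grid_mono hm (by omega)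
    have hv : G i j = ((grid k (n + 1)).filter (fun y => G y.1 y.2 ≤ G i j)).card :=
      value_eq_rank hbijG hm'
    rw [grid_split k n (fun y => G y.1 y.2 ≤ G i j)] at hv
    have hOld : ((grid k n).filter (fun y => G y.1 y.2 ≤ G i j)).card = H i j := by
      have he : (grid k n).filter (fun y => G y.1 y.2 ≤ G i j)
          = (grid k n).filter (fun y => H y.1 y.2 ≤ H i j) := by
        apply Finset.filter_congr
        intro y hy
        exact (hiso_le hy hm).symm
      rw [he]
      apply card_filter_le_of_bijOn (isFilling_bijOn_grid hgood.1)
      rw [grid_card]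
      exact (fill_mem hgood.1 hm).2
    have hNew : ((Finset.Icc 1 k).filter (fun c => G c (n + 1) ≤ G i j)).card
        = ncv k P n H (H i j) := by
      unfold ncv
      congr 1
      apply Finset.filter_congr
      intro c hc
      simp only [Finset.mem_Icc] at hc
      exact hnewsep hc.1 hc.2 hm
    rw [hOld, hNew] at hv
    exact hv
  -- conclude
  funext i j
  by_cases hm' : (i, j) ∈ grid k (n + 1)
  · by_cases hj : j ≤ n
    · have hm : (i, j) ∈ grid k n := by
        have := mem_grid.mp hm'
        exact mem_grid.mpr ⟨this.1, ⟨this.2.1, hj⟩⟩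
      rw [holdval hm, stepF_old_val hP hstd hk hn hgood hm]
    · have hmm := mem_grid.mp hm'
      have hj' : j = n + 1 := by omega
      subst hj'
      rw [hnewval hmm.1.1 hmm.1.2, stepF_new_val hP hstd hk hn hgood hmm.1.1 hmm.1.2]
  · have hG0 : G i j = 0 := by
      by_contra hne
      have := hGfill.1 i j hne
      exact hm' (mem_grid.mpr ⟨⟨this.1, this.2.1⟩, ⟨this.2.2.1, this.2.2.2⟩⟩)
    rw [hG0]
    simp [stepF, if_neg hm']

end StepLemmas


def baseF (k : ℕ) : ℕ → ℕ → ℕ := fun i j => if 1 ≤ i ∧ i ≤ k ∧ j = 1 then i else 0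

section Base

variable {k : ℕ} {P : ℕ → ℕ → ℕ}

lemma baseF_good (hk : 1 ≤ k) : Good k P 1 (baseF k) := by
  constructor
  · refine ⟨?_, ?_, ?_⟩
    · intro i j hne
      by_cases hc : 1 ≤ i ∧ i ≤ k ∧ j = 1
      · exact ⟨hc.1, hc.2.1, by omega, by omega⟩
      · simp only [baseF, if_neg hc] at hne
        exact absurd rfl hne
    · constructor
      · intro p hp
        simp only [Set.mem_prod, Set.mem_Icc] at hp
        have hc : 1 ≤ p.1 ∧ p.1 ≤ k ∧ p.2 = 1 := by omega
        simp only [baseF, if_pos hc, Set.mem_Icc]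
        omega
      constructor
      · intro p hp q hq hpq
        simp only [Set.mem_prod, Set.mem_Icc] at hp hq
        have hcp : 1 ≤ p.1 ∧ p.1 ≤ k ∧ p.2 = 1 := by omega
        have hcq : 1 ≤ q.1 ∧ q.1 ≤ k ∧ q.2 = 1 := by omega
        simp only [baseF, if_pos hcp, if_pos hcq] at hpq
        exact Prod.ext hpq (by omega)
      · intro v hv
        simp only [Set.mem_Icc] at hv
        refine ⟨(v, 1), ?_, ?_⟩
        · simp only [Set.mem_prod, Set.mem_Icc]
          omega
        · simp only [baseF, and_true]
          split_ifs with h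
          · rfl
          · omega
    · intro i j h1 h2 h3 h4
      have hj : j = 1 := by omega
      subst hj
      simp only [baseF, and_true]
      split_ifs <;> omega
  · intro i hi1 hin
    omega

lemma baseF_inv (hk : 1 ≤ k) : Inv k P 1 (baseF k) := by
  constructor
  · intro t ht1 htk _
    simp only [baseF, and_true]
    split_ifs <;> omega
  · simp only [baseF, and_true]
    split_ifs <;> omega

lemma baseF_unique (hk : 1 ≤ k) {G : ℕ → ℕ → ℕ} (hG : Good k P 1 G) : G = baseF k := by
  have hGfill := hG.1
  have hbijG := isFilling_bijOn_grid hGfill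
  funext i j
  by_cases hm : (i, j) ∈ grid k 1
  · have hmm := mem_grid.mp hm
    have hj : j = 1 := by omega
    subst hj
    have hv : G i 1 = ((grid k 1).filter (fun y => G y.1 y.2 ≤ G i 1)).card :=
      value_eq_rank hbijG hm
    have he : (grid k 1).filter (fun y => G y.1 y.2 ≤ G i 1) = grid i 1 := by
      apply Finset.ext
      intro y
      simp only [Finset.mem_filter]
      constructor
      · rintro ⟨hy, hle⟩
        have hy' := mem_grid.mp hy
        have hy2 : y.2 = 1 := by omega
        have : y.1 ≤ i := by
          have hiff := fill_col_le_iff hGfill (j := 1) (by omega) (by omega)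
            hy'.1.1 hy'.1.2 hmm.1.1 hmm.1.2
          apply hiff.mp
          have hyy : y = (y.1, 1) := Prod.ext rfl hy2
          rwa [hyy] at hle
        exact mem_grid.mpr ⟨⟨hy'.1.1, this⟩, hy'.2⟩
      · intro hy
        have hy' := mem_grid.mp hy
        have hy2 : y.2 = 1 := by omega
        refine ⟨mem_grid.mpr ⟨⟨hy'.1.1, by omega⟩, hy'.2⟩, ?_⟩
        have hiff := fill_col_le_iff hGfill (j := 1) (by omega) (by omega)
          hy'.1.1 (by omega) hmm.1.1 hmm.1.2
        have : G y.1 1 ≤ G i 1 := hiff.mpr hy'.1.2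
        have hyy : y = (y.1, 1) := Prod.ext rfl hy2
        rw [hyy]
        exact this
    rw [he, grid_card] at hv
    simp only [baseF, and_true]
    split_ifs <;> omega
  · have hG0 : G i j = 0 := by
      by_contra hne
      have := hGfill.1 i j hne
      exact hm (mem_grid.mpr ⟨⟨this.1, this.2.1⟩, ⟨this.2.2.1, this.2.2.2⟩⟩)
    simp only [baseF, and_true]
    split_ifs with hc
    · exact absurd (mem_grid.mpr ⟨⟨hc.1, hc.2.1⟩, by omega⟩) hm
    · exact hG0

lemma main_induction (hP : IsFilling 2 k P) (hstd : ∀ i, 1 ≤ i → i ≤ k → P i 1 < P i 2)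
    (hk : 1 ≤ k)
    (hdegb : ∀ t, 1 ≤ t → t < k → (∃ c, 1 ≤ c ∧ c ≤ k ∧ bb k P c = t) →
      bb k P (t + 1) = bb k P t) :
    ∀ n, 1 ≤ n → ∃ F, Good k P n F ∧ Inv k P n F ∧ ∀ G, Good k P n G → G = F := by
  intro n hn
  induction n, hn using Nat.le_induction with
  | base => exact ⟨baseF k, baseF_good hk, baseF_inv hk, fun G hG => baseF_unique hk hG⟩
  | succ n hn ih =>
    obtain ⟨H, hgood, hinv, huniq⟩ := ih
    exact ⟨stepF k P n H, stepF_good hP hstd hk hn hgood,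
      stepF_inv hP hstd hk hn hgood hinv hdegb,
      fun G hG => step_unique hP hstd hk hn hgood hinv huniq hG⟩

end Base

lemma fullCount_one_iff (n k : ℕ) (P : ℕ → ℕ → ℕ) :
    fullCount n k {P} = 1 ↔ ∃ F, Good k P n F ∧ ∀ G, Good k P n G → G = F := by
  have hQ : ∀ F : ℕ → ℕ → ℕ,
      (IsFilling n k F ∧ ∀ i, 1 ≤ i → i ≤ n - 1 → ∃ P' ∈ ({P} : Set (ℕ → ℕ → ℕ)),
        MatchAt 2 k P' F i) ↔ Good k P n F := by
    intro F
    unfold Good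
    constructor
    · rintro ⟨h1, h2⟩
      refine ⟨h1, fun i hi hi' => ?_⟩
      obtain ⟨P', hP', hm⟩ := h2 i hi hi'
      rw [Set.mem_singleton_iff] at hP'
      rwa [hP'] at hm
    · rintro ⟨h1, h2⟩
      exact ⟨h1, fun i hi hi' => ⟨P, Set.mem_singleton P, h2 i hi hi'⟩⟩
  rw [fullCount, Nat.card_eq_one_iff_exists]
  constructor
  · rintro ⟨⟨F, hF⟩, huniq⟩
    refine ⟨F, (hQ F).mp hF, fun G hG => ?_⟩
    have := huniq ⟨G, (hQ G).mpr hG⟩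
    exact congrArg Subtype.val this
  · rintro ⟨F, hF, huniq⟩
    refine ⟨⟨F, (hQ F).mpr hF⟩, ?_⟩
    rintro ⟨G, hG⟩
    exact Subtype.ext (huniq G ((hQ G).mp hG))



def uu (k : ℕ) (P : ℕ → ℕ → ℕ) (a : ℕ) : ℕ :=
  ((Finset.Icc 1 k).filter (fun c => P c 2 < P a 1)).card

def gapKey (k g r : ℕ) : ℕ := 4 * k * (2 * g + 1) + r

def rankF (k n : ℕ) (K : ℕ × ℕ → ℕ) : ℕ → ℕ → ℕ :=
  fun i j => if (i, j) ∈ grid k n then rk (grid k n) K (i, j) else 0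

section Fwd

variable {k : ℕ} {P : ℕ → ℕ → ℕ}

lemma uu_le (a : ℕ) : uu k P a ≤ k := by
  have h := Finset.card_le_card (Finset.filter_subset (fun c => P c 2 < P a 1) (Finset.Icc 1 k))
  simpa [uu] using h

lemma uu_mono (hP : IsFilling 2 k P) {a a' : ℕ} (ha : 1 ≤ a) (haa : a ≤ a') (hak : a' ≤ k) :
    uu k P a ≤ uu k P a' := by
  apply Finset.card_le_card
  intro c hc
  simp only [Finset.mem_filter] at hc ⊢
  exact ⟨hc.1, lt_of_lt_of_le hc.2 (fill_col_le hP (by omega) (by omega) ha haa hak)⟩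

lemma lt_iff_le_uu (hP : IsFilling 2 k P) {a c : ℕ}
    (ha : 1 ≤ a) (hak : a ≤ k) (hc : 1 ≤ c) (hck : c ≤ k) :
    P c 2 < P a 1 ↔ c ≤ uu k P a := by
  constructor
  · intro h
    have hsub : Finset.Icc 1 c ⊆ (Finset.Icc 1 k).filter (fun c' => P c' 2 < P a 1) := by
      intro c' hc'
      simp only [Finset.mem_Icc] at hc'
      simp only [Finset.mem_filter, Finset.mem_Icc]
      exact ⟨⟨hc'.1, le_trans hc'.2 hck⟩,
        lt_of_le_of_lt (fill_col_le hP (by omega) (by omega) hc'.1 hc'.2 hck) h⟩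
    have := Finset.card_le_card hsub
    simpa [uu] using this
  · intro h
    by_contra hn
    push_neg at hn
    have hne : P a 1 ≠ P c 2 := by
      intro he
      have := fill_inj hP (a := a) (j := 1) (c := c) (d := 2)
        (mem_grid.mpr ⟨⟨ha, hak⟩, by omega⟩) (mem_grid.mpr ⟨⟨hc, hck⟩, by omega⟩) he
      omega
    have hlt : P a 1 < P c 2 := by omega
    have hsub : (Finset.Icc 1 k).filter (fun c' => P c' 2 < P a 1) ⊆ Finset.Icc 1 (c - 1) := by
      intro c' hc'
      simp only [Finset.mem_filter, Finset.mem_Icc] at hc'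
      simp only [Finset.mem_Icc]
      refine ⟨hc'.1.1, ?_⟩
      by_contra hb
      push_neg at hb
      have : P c 2 ≤ P c' 2 := fill_col_le hP (by omega) (by omega) hc (by omega) hc'.1.2
      omega
    have h2 := Finset.card_le_card hsub
    simp only [Nat.card_Icc] at h2
    have : uu k P a ≤ c - 1 := by simpa [uu] using h2
    omega

lemma mul_lt_iff' {M A B : ℕ} (hM : 1 ≤ M) : M * A < M * B ↔ A < B := by
  obtain ⟨M', rfl⟩ : ∃ M', M = M' + 1 := ⟨M - 1, by omega⟩
  exact mul_lt_iff

lemma mul_le_iff' {M A B : ℕ} (hM : 1 ≤ M) : M * A ≤ M * B ↔ A ≤ B := by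
  obtain ⟨M', rfl⟩ : ∃ M', M = M' + 1 := ⟨M - 1, by omega⟩
  exact mul_le_iff

lemma gk_lt_even (hk : 1 ≤ k) {g c r : ℕ} (hr1 : 1 ≤ r) (hr2 : r ≤ 2 * k) :
    gapKey k g r < 4 * k * (2 * c) ↔ g < c := by
  unfold gapKey
  constructor
  · intro h
    by_contra hn
    push_neg at hn
    have h1 : 4 * k * (2 * c) ≤ 4 * k * (2 * g + 1) :=
      (mul_le_iff' (by omega)).mpr (by omega)
    omega
  · intro h
    have h1 : 4 * k * (2 * g + 2) ≤ 4 * k * (2 * c) :=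
      (mul_le_iff' (by omega)).mpr (by omega)
    have h2 : 4 * k * (2 * g + 2) = 4 * k * (2 * g + 1) + 4 * k := by ring
    omega

lemma gk_even_lt (hk : 1 ≤ k) {g c r : ℕ} (hr1 : 1 ≤ r) (hr2 : r ≤ 2 * k) :
    4 * k * (2 * c) < gapKey k g r ↔ c ≤ g := by
  unfold gapKey
  constructor
  · intro h
    by_contra hn
    push_neg at hn
    have h1 : 4 * k * (2 * g + 2) ≤ 4 * k * (2 * c) :=
      (mul_le_iff' (by omega)).mpr (by omega)
    have h2 : 4 * k * (2 * g + 2) = 4 * k * (2 * g + 1) + 4 * k := by ring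
    omega
  · intro h
    have h1 : 4 * k * (2 * c) < 4 * k * (2 * g + 1) :=
      (mul_lt_iff' (by omega)).mpr (by omega)
    omega

lemma gk_lt_gk (hk : 1 ≤ k) {g g' r r' : ℕ} (hr1 : 1 ≤ r) (hr2 : r ≤ 2 * k)
    (hr1' : 1 ≤ r') (hr2' : r' ≤ 2 * k) :
    gapKey k g r < gapKey k g' r' ↔ (g < g' ∨ (g = g' ∧ r < r')) := by
  unfold gapKey
  constructor
  · intro h
    rcases lt_trichotomy g g' with h3 | h3 | h3
    · exact Or.inl h3
    · exact Or.inr ⟨h3, by subst h3; omega⟩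
    · exfalso
      have h1 : 4 * k * (2 * g' + 2) ≤ 4 * k * (2 * g) :=
        (mul_le_iff' (by omega)).mpr (by omega)
      have h2 : 4 * k * (2 * g' + 2) = 4 * k * (2 * g' + 1) + 4 * k := by ring
      have h4 : 4 * k * (2 * g) ≤ 4 * k * (2 * g + 1) :=
        (mul_le_iff' (by omega)).mpr (by omega)
      omega
  · rintro (h3 | ⟨h3, h4⟩)
    · have h1 : 4 * k * (2 * g + 2) ≤ 4 * k * (2 * g' + 1) :=
        (mul_le_iff' (by omega)).mpr (by omega)
      have h2 : 4 * k * (2 * g + 2) = 4 * k * (2 * g + 1) + 4 * k := by ring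
      omega
    · subst h3; omega

lemma gk_ne_even (hk : 1 ≤ k) {g c r : ℕ} (hr1 : 1 ≤ r) (hr2 : r ≤ 2 * k) :
    gapKey k g r ≠ 4 * k * (2 * c) := by
  intro he
  rcases Nat.lt_or_ge g c with h | h
  · have := (gk_lt_even hk hr1 hr2).mpr h
    omega
  · have := (gk_even_lt hk hr1 hr2).mpr h
    omega

lemma gk_inj (hk : 1 ≤ k) {g g' r r' : ℕ} (hr1 : 1 ≤ r) (hr2 : r ≤ 2 * k)
    (hr1' : 1 ≤ r') (hr2' : r' ≤ 2 * k) (he : gapKey k g r = gapKey k g' r') :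
    g = g' ∧ r = r' := by
  rcases lt_trichotomy g g' with h | h | h
  · have := (gk_lt_gk hk hr1 hr2 hr1' hr2').mpr (Or.inl h); omega
  · subst h
    refine ⟨rfl, ?_⟩
    unfold gapKey at he
    omega
  · have := (gk_lt_gk hk hr1' hr2' hr1 hr2).mpr (Or.inl h); omega

end Fwd


section FwdGood

variable {k : ℕ} {P : ℕ → ℕ → ℕ} {K : ℕ × ℕ → ℕ}

lemma fwd_good (hP : IsFilling 2 k P) (hk : 1 ≤ k)
    (h12 : ∀ a c, 1 ≤ a → a ≤ k → 1 ≤ c → c ≤ k → (K (a, 1) < K (c, 2) ↔ P a 1 < P c 2))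
    (h21 : ∀ a c, 1 ≤ a → a ≤ k → 1 ≤ c → c ≤ k → (K (a, 2) < K (c, 1) ↔ P a 2 < P c 1))
    (h23 : ∀ a c, 1 ≤ a → a ≤ k → 1 ≤ c → c ≤ k → (K (a, 2) < K (c, 3) ↔ P a 1 < P c 2))
    (h32 : ∀ a c, 1 ≤ a → a ≤ k → 1 ≤ c → c ≤ k → (K (a, 3) < K (c, 2) ↔ P a 2 < P c 1))
    (hcol : ∀ t a c, 1 ≤ t → t ≤ 3 → 1 ≤ a → a < c → c ≤ k → K (a, t) < K (c, t))
    (h13 : ∀ a c, 1 ≤ a → a ≤ k → 1 ≤ c → c ≤ k → K (a, 1) ≠ K (c, 3)) :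
    Good k P 3 (rankF k 3 K) := by
  have hcolIff : ∀ t a c, 1 ≤ t → t ≤ 3 → 1 ≤ a → a ≤ k → 1 ≤ c → c ≤ k →
      (K (a, t) < K (c, t) ↔ a < c) := by
    intro t a c ht1 ht3 ha hak hc hck
    constructor
    · intro h
      by_contra hn
      push_neg at hn
      rcases lt_or_eq_of_le hn with h' | h'
      · have := hcol t c a ht1 ht3 hc h' hak
        omega
      · subst h'
        omega
    · intro h
      exact hcol t a c ht1 ht3 ha h hck
  have hKinj : Set.InjOn K ↑(grid k 3) := by
    intro x hx y hy hxy
    have hx' := mem_grid.mp (Finset.mem_coe.mp hx)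
    have hy' := mem_grid.mp (Finset.mem_coe.mp hy)
    have hxe : x = (x.1, x.2) := rfl
    have hye : y = (y.1, y.2) := rfl
    have h2ne : ∀ a c : ℕ, 1 ≤ a → a ≤ k → 1 ≤ c → c ≤ k → K (a, 1) = K (c, 2) → False := by
      intro a c ha hak hc hck he
      have hn1 : ¬ P a 1 < P c 2 := fun h => by
        have := (h12 a c ha hak hc hck).mpr h; omega
      have hn2 : ¬ P c 2 < P a 1 := fun h => by
        have := (h21 c a hc hck ha hak).mpr h; omega
      have : P a 1 = P c 2 := by omega
      have := fill_inj hP (a := a) (j := 1) (c := c) (d := 2)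
        (mem_grid.mpr ⟨⟨ha, hak⟩, by omega⟩) (mem_grid.mpr ⟨⟨hc, hck⟩, by omega⟩) this
      omega
    have h3ne : ∀ a c : ℕ, 1 ≤ a → a ≤ k → 1 ≤ c → c ≤ k → K (a, 2) = K (c, 3) → False := by
      intro a c ha hak hc hck he
      have hn1 : ¬ P a 1 < P c 2 := fun h => by
        have := (h23 a c ha hak hc hck).mpr h; omega
      have hn2 : ¬ P c 2 < P a 1 := fun h => by
        have := (h32 c a hc hck ha hak).mpr h; omega
      have : P a 1 = P c 2 := by omega
      have := fill_inj hP (a := a) (j := 1) (c := c) (d := 2)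
        (mem_grid.mpr ⟨⟨ha, hak⟩, by omega⟩) (mem_grid.mpr ⟨⟨hc, hck⟩, by omega⟩) this
      omega
    -- case on columns
    have hx2 : x.2 = 1 ∨ x.2 = 2 ∨ x.2 = 3 := by omega
    have hy2 : y.2 = 1 ∨ y.2 = 2 ∨ y.2 = 3 := by omega
    have hsame : x.2 = y.2 → x = y := by
      intro he2
      have : x.1 = y.1 := by
        by_contra hne
        rcases Nat.lt_or_ge x.1 y.1 with h | h
        · have := hcol x.2 x.1 y.1 (by omega) (by omega) hx'.1.1 h hy'.1.2
          rw [← hxe] at this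
          rw [he2, ← hye] at this
          omega
        · have h' : y.1 < x.1 := by omega
          have := hcol x.2 y.1 x.1 (by omega) (by omega) hy'.1.1 h' hx'.1.2
          rw [← hxe] at this
          rw [he2, ← hye] at this
          omega
      exact Prod.ext this (by omega)
    rcases hx2 with h2 | h2 | h2 <;> rcases hy2 with h2' | h2' | h2'
    · exact hsame (by omega)
    · exfalso
      apply h2ne x.1 y.1 hx'.1.1 hx'.1.2 hy'.1.1 hy'.1.2
      rw [← h2, ← h2', ← hxe, ← hye]; exact hxy
    · exfalso
      apply h13 x.1 y.1 hx'.1.1 hx'.1.2 hy'.1.1 hy'.1.2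
      rw [← h2, ← h2', ← hxe, ← hye]; exact hxy
    · exfalso
      apply h2ne y.1 x.1 hy'.1.1 hy'.1.2 hx'.1.1 hx'.1.2
      rw [← h2, ← h2', ← hxe, ← hye]; exact hxy.symm
    · exact hsame (by omega)
    · exfalso
      apply h3ne x.1 y.1 hx'.1.1 hx'.1.2 hy'.1.1 hy'.1.2
      rw [← h2, ← h2', ← hxe, ← hye]; exact hxy
    · exfalso
      apply h13 y.1 x.1 hy'.1.1 hy'.1.2 hx'.1.1 hx'.1.2
      rw [← h2, ← h2', ← hxe, ← hye]; exact hxy.symm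
    · exfalso
      apply h3ne y.1 x.1 hy'.1.1 hy'.1.2 hx'.1.1 hx'.1.2
      rw [← h2, ← h2', ← hxe, ← hye]; exact hxy.symm
    · exact hsame (by omega)
  -- now build Good
  have hlt : ∀ {a j a' j' : ℕ}, (a, j) ∈ grid k 3 → (a', j') ∈ grid k 3 →
      (rankF k 3 K a j < rankF k 3 K a' j' ↔ K (a, j) < K (a', j')) := by
    intro a j a' j' hm1 hm2
    simp only [rankF, if_pos hm1, if_pos hm2]
    exact rk_lt_iff hm1 hm2
  constructor
  · refine ⟨?_, ?_, ?_⟩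
    · intro i j hne
      by_cases hm : (i, j) ∈ grid k 3
      · have := mem_grid.mp hm
        exact ⟨this.1.1, this.1.2, this.2.1, this.2.2⟩
      · simp only [rankF, if_neg hm] at hne
        exact absurd rfl hne
    · have hb := rk_bijOn (S := grid k 3) (K := K) hKinj
      have heq : Set.EqOn (rk (grid k 3) K)
          (fun p : ℕ × ℕ => rankF k 3 K p.1 p.2) ↑(grid k 3) := by
        intro p hp
        have hp' : (p.1, p.2) ∈ grid k 3 := by
          rw [Prod.mk.eta]; exact Finset.mem_coe.mp hp
        simp only [rankF, if_pos hp', Prod.mk.eta]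
      have hres := hb.congr heq
      rw [coe_grid, grid_card] at hres
      exact hres
    · intro a j ha hak hj1 hj3
      rw [hlt (mem_gr ha (by omega) hj1 hj3) (mem_gr (by omega) (by omega) hj1 hj3)]
      exact hcol j a (a + 1) hj1 hj3 ha (by omega) (by omega)
  · intro i hi1 hin a b c d ha hak hb1 hb2 hc hck hd1 hd2
    have hi2 : i = 1 ∨ i = 2 := by omega
    have hm1 : (a, i - 1 + b) ∈ grid k 3 := mem_gr ha hak (by omega) (by omega)
    have hm2 : (c, i - 1 + d) ∈ grid k 3 := mem_gr hc hck (by omega) (by omega)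
    rw [hlt hm1 hm2]
    have hb' : b = 1 ∨ b = 2 := by omega
    have hd' : d = 1 ∨ d = 2 := by omega
    rcases hi2 with hi | hi <;> subst hi <;>
      rcases hb' with hb' | hb' <;> subst hb' <;> rcases hd' with hd' | hd' <;> subst hd'
    · show K (a, 1) < K (c, 1) ↔ P a 1 < P c 1
      rw [hcolIff 1 a c (by omega) (by omega) ha hak hc hck]
      exact (fill_col_lt_iff hP (by omega) (by omega) ha hak hc hck).symm
    · exact h12 a c ha hak hc hck
    · exact h21 a c ha hak hc hck
    · show K (a, 2) < K (c, 2) ↔ P a 2 < P c 2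
      rw [hcolIff 2 a c (by omega) (by omega) ha hak hc hck]
      exact (fill_col_lt_iff hP (by omega) (by omega) ha hak hc hck).symm
    · show K (a, 2) < K (c, 2) ↔ P a 1 < P c 1
      rw [hcolIff 2 a c (by omega) (by omega) ha hak hc hck]
      exact (fill_col_lt_iff hP (by omega) (by omega) ha hak hc hck).symm
    · exact h23 a c ha hak hc hck
    · exact h32 a c ha hak hc hck
    · show K (a, 3) < K (c, 3) ↔ P a 2 < P c 2
      rw [hcolIff 3 a c (by omega) (by omega) ha hak hc hck]
      exact (fill_col_lt_iff hP (by omega) (by omega) ha hak hc hck).symm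

end FwdGood


def fwdK1 (k : ℕ) (P : ℕ → ℕ → ℕ) : ℕ × ℕ → ℕ :=
  fun x => if x.2 = 1 then gapKey k (uu k P x.1) x.1
           else if x.2 = 2 then 4 * k * (2 * x.1)
           else gapKey k (bb k P x.1) (k + x.1)

def fwdK2 (k : ℕ) (P : ℕ → ℕ → ℕ) (m j : ℕ) : ℕ × ℕ → ℕ :=
  fun x => if x = (m, 1) then gapKey k (uu k P m) (k + j)
           else if x = (j, 3) then gapKey k (bb k P j) m
           else fwdK1 k P x

section FwdMain

variable {k : ℕ} {P : ℕ → ℕ → ℕ}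

lemma forward_main (hP : IsFilling 2 k P) (hstd : ∀ i, 1 ≤ i → i ≤ k → P i 1 < P i 2)
    (hk : 2 ≤ k) (h3 : fullCount 3 k {P} = 1) {i : ℕ} (hi1 : 1 ≤ i) (hik : i < k)
    (hnd1 : P i 1 + 1 ≠ P (i + 1) 1) (hnd2 : P i 2 + 1 ≠ P (i + 1) 2) : False := by
  have hk1 : 1 ≤ k := by omega
  have hlt1 : P i 1 < P (i + 1) 1 :=
    fill_col_lt hP (by omega) (by omega) hi1 (by omega) (by omega)
  have hlt2 : P i 2 < P (i + 1) 2 :=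
    fill_col_lt hP (by omega) (by omega) hi1 (by omega) (by omega)
  have hs1 : P i 1 + 2 ≤ P (i + 1) 1 := by omega
  have hs2 : P i 2 + 2 ≤ P (i + 1) 2 := by omega
  -- j witness : P j 2 = P i 1 + 1
  obtain ⟨j, hj1, hjk, hjv⟩ : ∃ j, 1 ≤ j ∧ j ≤ k ∧ P j 2 = P i 1 + 1 := by
    have hv2 : P i 1 + 1 ≤ k * 2 := by
      have := (fill_mem hP (mem_gr (k := k) (by omega) (by omega) (by omega)
        (by omega : (1:ℕ) ≤ 2) : (i + 1, 1) ∈ grid k 2)).2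
      omega
    obtain ⟨x, hxm, hxv⟩ := fill_surj hP (by omega : 1 ≤ P i 1 + 1) hv2
    have hx' := mem_grid.mp hxm
    by_cases hxd : x.2 = 2
    · rw [hxd] at hxv
      exact ⟨x.1, hx'.1.1, hx'.1.2, hxv⟩
    · exfalso
      have hx1 : x.2 = 1 := by omega
      rw [hx1] at hxv
      have h1 : i < x.1 := by
        apply (fill_col_lt_iff hP (j := 1) (by omega) (by omega) hi1 (by omega)
          hx'.1.1 hx'.1.2).mp
        omega
      have h2 : x.1 < i + 1 := by
        apply (fill_col_lt_iff hP (j := 1) (by omega) (by omega) hx'.1.1 hx'.1.2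
          (by omega) (by omega)).mp
        omega
      omega
  -- m' witness : P m' 1 = P i 2 + 1
  obtain ⟨m', hm'1, hm'k, hm'v⟩ : ∃ m', 1 ≤ m' ∧ m' ≤ k ∧ P m' 1 = P i 2 + 1 := by
    have hv2 : P i 2 + 1 ≤ k * 2 := by
      have := (fill_mem hP (mem_gr (k := k) (by omega) (by omega) (by omega)
        (by omega : (2:ℕ) ≤ 2) : (i + 1, 2) ∈ grid k 2)).2
      omega
    obtain ⟨x, hxm, hxv⟩ := fill_surj hP (by omega : 1 ≤ P i 2 + 1) hv2
    have hx' := mem_grid.mp hxm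
    by_cases hxd : x.2 = 1
    · rw [hxd] at hxv
      exact ⟨x.1, hx'.1.1, hx'.1.2, hxv⟩
    · exfalso
      have hx1 : x.2 = 2 := by omega
      rw [hx1] at hxv
      have h1 : i < x.1 := by
        apply (fill_col_lt_iff hP (j := 2) (by omega) (by omega) hi1 (by omega)
          hx'.1.1 hx'.1.2).mp
        omega
      have h2 : x.1 < i + 1 := by
        apply (fill_col_lt_iff hP (j := 2) (by omega) (by omega) hx'.1.1 hx'.1.2
          (by omega) (by omega)).mp
        omega
      omega
  set m := bb k P (i + 1) with hmdef
  have hmk : m ≤ k := bb_le _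
  have hm1 : 1 ≤ m := one_le_bb hP hstd (by omega) (by omega) hk1
  have hm'le : m' ≤ m := by
    apply (lt_iff_le_bb hP hm'1 hm'k (by omega) (by omega)).mp
    omega
  have hPm_gt : P i 2 < P m 1 := by
    have := fill_col_le hP (j := 1) (by omega) (by omega) hm'1 hm'le hmk
    omega
  have hPm_lt : P m 1 < P (i + 1) 2 :=
    (lt_iff_le_bb hP hm1 hmk (by omega) (by omega)).mpr (le_refl m)
  -- uu m = i
  have huum : uu k P m = i := by
    have he : (Finset.Icc 1 k).filter (fun c => P c 2 < P m 1) = Finset.Icc 1 i := by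
      apply Finset.ext
      intro c
      simp only [Finset.mem_filter, Finset.mem_Icc]
      constructor
      · rintro ⟨⟨h1, h2⟩, h3⟩
        refine ⟨h1, ?_⟩
        by_contra hb
        push_neg at hb
        have : P (i + 1) 2 ≤ P c 2 :=
          fill_col_le hP (by omega) (by omega) (by omega) (by omega) h2
        omega
      · rintro ⟨h1, h2⟩
        have h3 : P c 2 ≤ P i 2 := fill_col_le hP (by omega) (by omega) h1 h2 (by omega)
        exact ⟨⟨h1, by omega⟩, by omega⟩
    unfold uu
    rw [he]
    simp
  -- bb j = i
  have hbbj : bb k P j = i := by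
    have he : (Finset.Icc 1 k).filter (fun a => P a 1 < P j 2) = Finset.Icc 1 i := by
      apply Finset.ext
      intro a
      simp only [Finset.mem_filter, Finset.mem_Icc]
      constructor
      · rintro ⟨⟨h1, h2⟩, h3⟩
        refine ⟨h1, ?_⟩
        have h4 : P a 1 ≤ P i 1 := by omega
        by_contra hb
        push_neg at hb
        have : P i 1 < P a 1 := fill_col_lt hP (by omega) (by omega) hi1 hb h2
        omega
      · rintro ⟨h1, h2⟩
        have h3 : P a 1 ≤ P i 1 := fill_col_le hP (by omega) (by omega) h1 h2 (by omega)
        exact ⟨⟨h1, by omega⟩, by omega⟩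
    unfold bb
    rw [he]
    simp
  -- maximality of m, minimality of j
  have hmmax : ∀ a, 1 ≤ a → a ≤ k → uu k P a = i → a ≤ m := by
    intro a ha hak hua
    have h1 : ¬ (P (i + 1) 2 < P a 1) := by
      intro hcon
      have := (lt_iff_le_uu hP ha hak (by omega) (by omega)).mp hcon
      omega
    have hne : P a 1 ≠ P (i + 1) 2 := by
      intro he
      have := fill_inj hP (a := a) (j := 1) (c := i + 1) (d := 2)
        (mem_gr ha hak (by omega) (by omega)) (mem_gr (by omega) (by omega) (by omega) (by omega)) he
      omega
    exact (lt_iff_le_bb hP ha hak (by omega) (by omega)).mp (by omega)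
  have hjmin : ∀ c, 1 ≤ c → c ≤ k → bb k P c = i → j ≤ c := by
    intro c hc hck hbc
    by_contra hb
    push_neg at hb
    have h1 : P c 2 < P j 2 := fill_col_lt hP (by omega) (by omega) hc hb hjk
    have h2 : P c 2 ≤ P i 1 := by omega
    have hsub : (Finset.Icc 1 k).filter (fun a => P a 1 < P c 2) ⊆ Finset.Icc 1 (i - 1) := by
      intro a ha
      simp only [Finset.mem_filter, Finset.mem_Icc] at ha
      simp only [Finset.mem_Icc]
      refine ⟨ha.1.1, ?_⟩
      have h3 : P a 1 < P i 1 := by omega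
      by_contra hb2
      push_neg at hb2
      have hb3 : i ≤ a := by omega
      have : P i 1 ≤ P a 1 := fill_col_le hP (by omega) (by omega) hi1 hb3 ha.1.2
      omega
    have h4 := Finset.card_le_card hsub
    simp only [Nat.card_Icc] at h4
    have h5 : bb k P c ≤ i - 1 := by
      unfold bb
      omega
    omega
  -- generic gap comparisons
  have hgen12 : ∀ a c r, 1 ≤ a → a ≤ k → 1 ≤ c → c ≤ k → 1 ≤ r → r ≤ 2 * k →
      (gapKey k (uu k P a) r < 4 * k * (2 * c) ↔ P a 1 < P c 2) := by
    intro a c r ha hak hc hck hr1 hr2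
    rw [gk_lt_even hk1 hr1 hr2]
    constructor
    · intro h
      have h1 : ¬ P c 2 < P a 1 := by
        intro hcon
        have := (lt_iff_le_uu hP ha hak hc hck).mp hcon
        omega
      have hne : P a 1 ≠ P c 2 := by
        intro he
        have := fill_inj hP (a := a) (j := 1) (c := c) (d := 2)
          (mem_gr ha hak (by omega) (by omega)) (mem_gr hc hck (by omega) (by omega)) he
        omega
      omega
    · intro h
      by_contra hb
      push_neg at hb
      have := (lt_iff_le_uu hP ha hak hc hck).mpr hb
      omega
  have hgen21 : ∀ a c r, 1 ≤ a → a ≤ k → 1 ≤ c → c ≤ k → 1 ≤ r → r ≤ 2 * k →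
      (4 * k * (2 * a) < gapKey k (uu k P c) r ↔ P a 2 < P c 1) := by
    intro a c r ha hak hc hck hr1 hr2
    rw [gk_even_lt hk1 hr1 hr2]
    exact (lt_iff_le_uu hP hc hck ha hak).symm
  have hgen23 : ∀ a c r, 1 ≤ a → a ≤ k → 1 ≤ c → c ≤ k → 1 ≤ r → r ≤ 2 * k →
      (4 * k * (2 * a) < gapKey k (bb k P c) r ↔ P a 1 < P c 2) := by
    intro a c r ha hak hc hck hr1 hr2
    rw [gk_even_lt hk1 hr1 hr2]
    exact (lt_iff_le_bb hP ha hak hc hck).symm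
  have hgen32 : ∀ a c r, 1 ≤ a → a ≤ k → 1 ≤ c → c ≤ k → 1 ≤ r → r ≤ 2 * k →
      (gapKey k (bb k P a) r < 4 * k * (2 * c) ↔ P a 2 < P c 1) := by
    intro a c r ha hak hc hck hr1 hr2
    rw [gk_lt_even hk1 hr1 hr2]
    constructor
    · intro h
      have h1 : ¬ P c 1 < P a 2 := by
        intro hcon
        have := (lt_iff_le_bb hP hc hck ha hak).mp hcon
        omega
      have hne : P a 2 ≠ P c 1 := by
        intro he
        have := fill_inj hP (a := a) (j := 2) (c := c) (d := 1)
          (mem_gr ha hak (by omega) (by omega)) (mem_gr hc hck (by omega) (by omega)) he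
        omega
      omega
    · intro h
      by_contra hb
      push_neg at hb
      have := (lt_iff_le_bb hP hc hck ha hak).mpr hb
      omega
  -- key evaluations
  have hK1_1 : ∀ a : ℕ, fwdK1 k P (a, 1) = gapKey k (uu k P a) a := by
    intro a; simp [fwdK1]
  have hK1_2 : ∀ a : ℕ, fwdK1 k P (a, 2) = 4 * k * (2 * a) := by
    intro a; simp [fwdK1]
  have hK1_3 : ∀ a : ℕ, fwdK1 k P (a, 3) = gapKey k (bb k P a) (k + a) := by
    intro a; simp [fwdK1]
  have hK2_2 : ∀ a : ℕ, fwdK2 k P m j (a, 2) = 4 * k * (2 * a) := by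
    intro a
    have h1 : ((a, 2) : ℕ × ℕ) ≠ (m, 1) := by simp
    have h2 : ((a, 2) : ℕ × ℕ) ≠ (j, 3) := by simp
    rw [fwdK2]
    simp only [if_neg h1, if_neg h2]
    exact hK1_2 a
  have hK2_1 : ∀ a : ℕ, 1 ≤ a → a ≤ k →
      ∃ r, 1 ≤ r ∧ r ≤ 2 * k ∧ fwdK2 k P m j (a, 1) = gapKey k (uu k P a) r := by
    intro a ha hak
    by_cases he : a = m
    · subst he
      exact ⟨k + j, by omega, by omega, by simp [fwdK2]⟩
    · refine ⟨a, ha, by omega, ?_⟩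
      have h1 : ((a, 1) : ℕ × ℕ) ≠ (m, 1) := by simp [he]
      have h2 : ((a, 1) : ℕ × ℕ) ≠ (j, 3) := by simp
      rw [fwdK2]
      simp only [if_neg h1, if_neg h2]
      exact hK1_1 a
  have hK2_3 : ∀ a : ℕ, 1 ≤ a → a ≤ k →
      ∃ r, 1 ≤ r ∧ r ≤ 2 * k ∧ fwdK2 k P m j (a, 3) = gapKey k (bb k P a) r := by
    intro a ha hak
    by_cases he : a = j
    · subst he
      refine ⟨m, hm1, by omega, ?_⟩
      have h1 : ((a, 3) : ℕ × ℕ) ≠ (m, 1) := by simp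
      rw [fwdK2]
      simp [h1]
    · refine ⟨k + a, by omega, by omega, ?_⟩
      have h1 : ((a, 3) : ℕ × ℕ) ≠ (m, 1) := by simp
      have h2 : ((a, 3) : ℕ × ℕ) ≠ (j, 3) := by simp [he]
      rw [fwdK2]
      simp only [if_neg h1, if_neg h2]
      exact hK1_3 a
  -- Good for K1
  have good1 : Good k P 3 (rankF k 3 (fwdK1 k P)) := by
    apply fwd_good hP hk1
    · intro a c ha hak hc hck
      rw [hK1_1 a, hK1_2 c]
      exact hgen12 a c a ha hak hc hck ha (by omega)
    · intro a c ha hak hc hck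
      rw [hK1_2 a, hK1_1 c]
      exact hgen21 a c c ha hak hc hck hc (by omega)
    · intro a c ha hak hc hck
      rw [hK1_2 a, hK1_3 c]
      exact hgen23 a c (k + c) ha hak hc hck (by omega) (by omega)
    · intro a c ha hak hc hck
      rw [hK1_3 a, hK1_2 c]
      exact hgen32 a c (k + a) ha hak hc hck (by omega) (by omega)
    · intro t a c ht1 ht3 ha hac hck
      have ht : t = 1 ∨ t = 2 ∨ t = 3 := by omega
      rcases ht with ht | ht | ht <;> subst ht
      · rw [hK1_1 a, hK1_1 c]
        apply (gk_lt_gk hk1 (by omega) (by omega) (by omega) (by omega)).mpr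
        rcases lt_or_eq_of_le (uu_mono hP ha hac.le hck) with h | h
        · exact Or.inl h
        · exact Or.inr ⟨h, hac⟩
      · rw [hK1_2 a, hK1_2 c]
        exact (mul_lt_iff' (by omega)).mpr (by omega)
      · rw [hK1_3 a, hK1_3 c]
        apply (gk_lt_gk hk1 (by omega) (by omega) (by omega) (by omega)).mpr
        rcases lt_or_eq_of_le (bb_mono hP ha hac.le hck) with h | h
        · exact Or.inl h
        · exact Or.inr ⟨h, by omega⟩
    · intro a c ha hak hc hck he
      rw [hK1_1 a, hK1_3 c] at he
      have := gk_inj hk1 (g := uu k P a) (r := a) (by omega) (by omega)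
        (g' := bb k P c) (r' := k + c) (by omega) (by omega) he
      omega
  -- Good for K2
  have hK2_1e : ∀ a : ℕ,
      fwdK2 k P m j (a, 1) = gapKey k (uu k P a) (if a = m then k + j else a) := by
    intro a
    by_cases he : a = m
    · subst he
      simp [fwdK2]
    · have h1 : ((a, 1) : ℕ × ℕ) ≠ (m, 1) := by simp [he]
      have h2 : ((a, 1) : ℕ × ℕ) ≠ (j, 3) := by simp
      rw [fwdK2]
      simp only [if_neg h1, if_neg h2, if_neg he]
      exact hK1_1 a
  have hK2_3e : ∀ a : ℕ,
      fwdK2 k P m j (a, 3) = gapKey k (bb k P a) (if a = j then m else k + a) := by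
    intro a
    have h1 : ((a, 3) : ℕ × ℕ) ≠ (m, 1) := by simp
    by_cases he : a = j
    · subst he
      rw [fwdK2]
      simp [h1]
    · have h2 : ((a, 3) : ℕ × ℕ) ≠ (j, 3) := by simp [he]
      rw [fwdK2]
      simp only [if_neg h1, if_neg h2, if_neg he]
      exact hK1_3 a
  have good2 : Good k P 3 (rankF k 3 (fwdK2 k P m j)) := by
    apply fwd_good hP hk1
    · intro a c ha hak hc hck
      rw [hK2_1e a, hK2_2 c]
      exact hgen12 a c _ ha hak hc hck (by split_ifs <;> omega) (by split_ifs <;> omega)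
    · intro a c ha hak hc hck
      rw [hK2_2 a, hK2_1e c]
      exact hgen21 a c _ ha hak hc hck (by split_ifs <;> omega) (by split_ifs <;> omega)
    · intro a c ha hak hc hck
      rw [hK2_2 a, hK2_3e c]
      exact hgen23 a c _ ha hak hc hck (by split_ifs <;> omega) (by split_ifs <;> omega)
    · intro a c ha hak hc hck
      rw [hK2_3e a, hK2_2 c]
      exact hgen32 a c _ ha hak hc hck (by split_ifs <;> omega) (by split_ifs <;> omega)
    · intro t a c ht1 ht3 ha hac hck
      have hak : a ≤ k := by omega
      have hc1 : 1 ≤ c := by omega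
      have ht : t = 1 ∨ t = 2 ∨ t = 3 := by omega
      rcases ht with ht | ht | ht <;> subst ht
      · rw [hK2_1e a, hK2_1e c]
        apply (gk_lt_gk hk1 (by split_ifs <;> omega) (by split_ifs <;> omega)
          (by split_ifs <;> omega) (by split_ifs <;> omega)).mpr
        rcases lt_or_eq_of_le (uu_mono hP ha hac.le hck) with h | h
        · exact Or.inl h
        · refine Or.inr ⟨h, ?_⟩
          by_cases ham : a = m
          · exfalso
            have hciu : uu k P c = i := by rw [← h, ham, huum]
            have := hmmax c hc1 hck hciu
            omega
          · by_cases hcm : c = m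
            · rw [if_neg ham, if_pos hcm]
              omega
            · rw [if_neg ham, if_neg hcm]
              exact hac
      · rw [hK2_2 a, hK2_2 c]
        exact (mul_lt_iff' (by omega)).mpr (by omega)
      · rw [hK2_3e a, hK2_3e c]
        apply (gk_lt_gk hk1 (by split_ifs <;> omega) (by split_ifs <;> omega)
          (by split_ifs <;> omega) (by split_ifs <;> omega)).mpr
        rcases lt_or_eq_of_le (bb_mono hP ha hac.le hck) with h | h
        · exact Or.inl h
        · refine Or.inr ⟨h, ?_⟩
          by_cases haj : a = j
          · rw [if_pos haj]
            by_cases hcj : c = j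
            · omega
            · rw [if_neg hcj]
              omega
          · by_cases hcj : c = j
            · exfalso
              have hbai : bb k P a = i := by rw [h, hcj, hbbj]
              have := hjmin a ha hak hbai
              omega
            · rw [if_neg haj, if_neg hcj]
              omega
    · intro a c ha hak hc hck he
      rw [hK2_1e a, hK2_3e c] at he
      have hr := gk_inj hk1 (by split_ifs <;> omega) (by split_ifs <;> omega)
        (by split_ifs <;> omega) (by split_ifs <;> omega) he
      by_cases ham : a = m <;> by_cases hcj : c = j
      · rw [if_pos ham, if_pos hcj] at hr
        omega
      · rw [if_pos ham, if_neg hcj] at hr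
        exact hcj (by omega)
      · rw [if_neg ham, if_pos hcj] at hr
        exact ham (by omega)
      · rw [if_neg ham, if_neg hcj] at hr
        omega
  -- derive the contradiction
  obtain ⟨F, hFgood, hFuniq⟩ := (fullCount_one_iff 3 k P).mp h3
  have e1 := hFuniq _ good1
  have e2 := hFuniq _ good2
  have hmem1 : (m, 1) ∈ grid k 3 := mem_gr hm1 hmk (by omega) (by omega)
  have hmem2 : (j, 3) ∈ grid k 3 := mem_gr hj1 hjk (by omega) (by omega)
  have hA : rankF k 3 (fwdK1 k P) m 1 < rankF k 3 (fwdK1 k P) j 3 := by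
    simp only [rankF, if_pos hmem1, if_pos hmem2]
    apply rk_lt_of_lt hmem2
    rw [hK1_1 m, hK1_3 j, huum, hbbj]
    exact (gk_lt_gk hk1 hm1 (by omega) (by omega) (by omega)).mpr (Or.inr ⟨rfl, by omega⟩)
  have hB : rankF k 3 (fwdK2 k P m j) j 3 < rankF k 3 (fwdK2 k P m j) m 1 := by
    simp only [rankF, if_pos hmem1, if_pos hmem2]
    apply rk_lt_of_lt hmem1
    have hKm : fwdK2 k P m j (m, 1) = gapKey k i (k + j) := by
      rw [hK2_1e m]
      rw [if_pos rfl, huum]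
    have hKj : fwdK2 k P m j (j, 3) = gapKey k i m := by
      rw [hK2_3e j]
      rw [if_pos rfl, hbbj]
    rw [hKm, hKj]
    exact (gk_lt_gk hk1 hm1 (by omega) (by omega) (by omega)).mpr (Or.inr ⟨rfl, by omega⟩)
  rw [e1] at hA
  rw [e2] at hB
  omega

end FwdMain

end Stmt16

/-- For a standard tableau `P` of shape `2^k` with `k ≥ 2`: `full_n^P = 1` for all
`n ≥ 1` iff `P` is degenerate, i.e. for every `1 ≤ i < k`, at least one of
`P(i,1)+1 = P(i+1,1)` or `P(i,2)+1 = P(i+1,2)` holds. -/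
theorem stmt16 (k : ℕ) (hk : 2 ≤ k) (P : ℕ → ℕ → ℕ) (hP : IsFilling 2 k P)
    (hstd : ∀ i, 1 ≤ i → i ≤ k → P i 1 < P i 2) :
    (∀ n, 1 ≤ n → fullCount n k {P} = 1) ↔
      (∀ i, 1 ≤ i → i < k → P i 1 + 1 = P (i + 1) 1 ∨ P i 2 + 1 = P (i + 1) 2) := by
  constructor
  · intro hall i hi1 hik
    by_contra hnd
    push_neg at hnd
    exact Stmt16.forward_main hP hstd hk (hall 3 (by omega)) hi1 hik hnd.1 hnd.2
  · intro hdeg n hn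
    have hdegb : ∀ t, 1 ≤ t → t < k →
        (∃ c, 1 ≤ c ∧ c ≤ k ∧ Stmt16.bb k P c = t) →
        Stmt16.bb k P (t + 1) = Stmt16.bb k P t :=
      fun t ht1 htk hex => Stmt16.deg_bb hP hdeg ht1 htk hex
    obtain ⟨F, hgood, _, huniq⟩ :=
      Stmt16.main_induction hP hstd (by omega) hdegb n hn
    exact (Stmt16.fullCount_one_iff n k P).mpr ⟨F, hgood, fun G hG => huniq G hG⟩
end

section
/- Let k ≥ 2 and let P ∈ St_{2^k} be a standard tableau of shape 2^k that is not degenerate, i.e. there exists 1 ≤ i < k with P(i,1)+1 ≠ P(i+1,1) and P(i,2)+1 ≠ P(i+1,2). Then full_n^P ≥ 2 for all n ≥ 3. -/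
/-!
Model the rows of `P` by unit intervals `[x a, x a + 1]` whose endpoints are in the same relative
order as the entries of `P`. Such an `x` is built row by row: the left endpoint of a new row only
has to lie in an open interval cut out by the rows below, and that interval is never empty.
Placing cell `(a, j)` of the `k × n` rectangle at height `x a + j` and numbering the cells by
height gives a filling with a `P`-match at every position, whatever order is used among cells of
equal height.

Non-degeneracy at row `q` produces rows `b`, `c` with `P c 2 = P q 1 + 1` and
`P b 1 = P q 2 + 1`, and for these the value `x b = x c + 2` is admissible. Then the cells
`(b, 1)` and `(c, 3)` have the same height, and breaking ties by increasing or by decreasing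
column gives two different fillings.
-/

open Finset

namespace IsFilling

variable {n k : ℕ} {F : ℕ → ℕ → ℕ}

lemma mem_Icc (hF : IsFilling n k F) {i j : ℕ} (hi : 1 ≤ i) (hik : i ≤ k) (hj : 1 ≤ j)
    (hjn : j ≤ n) : F i j ∈ Set.Icc 1 (k * n) :=
  hF.2.1.mapsTo (x := (i, j)) ⟨⟨hi, hik⟩, hj, hjn⟩

lemma apply_le_mul (hF : IsFilling n k F) (i j : ℕ) : F i j ≤ k * n := by
  by_cases h : F i j = 0
  · omega
  · obtain ⟨hi, hik, hj, hjn⟩ := hF.1 i j h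
    exact (hF.mem_Icc hi hik hj hjn).2

lemma eq_and_eq_of_eq (hF : IsFilling n k F) {a j a' j' : ℕ} (ha : 1 ≤ a) (hak : a ≤ k)
    (hj : 1 ≤ j) (hjn : j ≤ n) (ha' : 1 ≤ a') (hak' : a' ≤ k) (hj' : 1 ≤ j') (hjn' : j' ≤ n)
    (h : F a j = F a' j') : a = a' ∧ j = j' :=
  Prod.ext_iff.1 (hF.2.1.injOn (x₁ := (a, j)) (x₂ := (a', j')) ⟨⟨ha, hak⟩, hj, hjn⟩
    ⟨⟨ha', hak'⟩, hj', hjn'⟩ h)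

lemma lt_of_lt (hF : IsFilling n k F) {a a' j : ℕ} (ha : 1 ≤ a) (h : a < a') (hak : a' ≤ k)
    (hj : 1 ≤ j) (hjn : j ≤ n) : F a j < F a' j := by
  induction a', h using Nat.le_induction with
  | base => exact hF.2.2 a j ha hak hj hjn
  | succ a' h ih => exact (ih (by omega)).trans (hF.2.2 a' j (by omega) hak hj hjn)

lemma le_of_le (hF : IsFilling n k F) {a a' j : ℕ} (ha : 1 ≤ a) (h : a ≤ a') (hak : a' ≤ k)
    (hj : 1 ≤ j) (hjn : j ≤ n) : F a j ≤ F a' j :=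
  h.eq_or_lt.elim (fun h => h ▸ le_rfl) fun h => (hF.lt_of_lt ha h hak hj hjn).le

lemma lt_iff_lt (hF : IsFilling n k F) {a a' j : ℕ} (ha : 1 ≤ a) (hak : a ≤ k) (ha' : 1 ≤ a')
    (hak' : a' ≤ k) (hj : 1 ≤ j) (hjn : j ≤ n) : F a j < F a' j ↔ a < a' := by
  refine ⟨fun h => ?_, fun h => hF.lt_of_lt ha h hak' hj hjn⟩
  by_contra hle
  rcases (not_lt.1 hle).lt_or_eq with hlt | rfl
  · exact (hF.lt_of_lt ha' hlt hak hj hjn).asymm h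
  · exact h.false

lemma exists_eq_succ (hF : IsFilling n k F) {q j : ℕ} (hq : 1 ≤ q) (hqk : q < k) (hj : 1 ≤ j)
    (hjn : j ≤ n) (hgap : F q j + 1 ≠ F (q + 1) j) :
    ∃ r j', 1 ≤ r ∧ r ≤ k ∧ 1 ≤ j' ∧ j' ≤ n ∧ j' ≠ j ∧ F r j' = F q j + 1 := by
  have hlt : F q j < F (q + 1) j := hF.2.2 q j hq hqk hj hjn
  have hle := (hF.mem_Icc (i := q + 1) (by omega) hqk hj hjn).2
  obtain ⟨⟨r, j'⟩, ⟨⟨hr, hrk⟩, hj', hjn'⟩, hval⟩ :=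
    hF.2.1.surjOn (show F q j + 1 ∈ Set.Icc 1 (k * n) from ⟨by omega, by omega⟩)
  dsimp only at hval
  refine ⟨r, j', hr, hrk, hj', hjn', ?_, hval⟩
  rintro rfl
  have h₁ := (hF.lt_iff_lt (a' := r) hq (by omega) hr hrk hj hjn).1 (by omega)
  have h₂ := (hF.lt_iff_lt (a := r) (a' := q + 1) hr hrk (by omega) hqk hj hjn).1
    (by omega)
  omega

lemma finite_setOf (n k : ℕ) : {F | IsFilling n k F}.Finite := by
  let extend (φ : Fin (k + 1) → Fin (n + 1) → Fin (k * n + 1)) (i j : ℕ) : ℕ :=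
    if h : i < k + 1 ∧ j < n + 1 then φ ⟨i, h.1⟩ ⟨j, h.2⟩ else 0
  refine (Set.finite_range extend).subset fun F hF => ⟨fun i j => ⟨F i j, by
    have := hF.apply_le_mul i j; omega⟩, funext₂ fun i j => ?_⟩
  by_cases h : i < k + 1 ∧ j < n + 1
  · simp only [extend, dif_pos h]
  · have : F i j = 0 := by
      by_contra h0
      have := hF.1 i j h0
      omega
    simp only [extend, dif_neg h, this]

end IsFilling

lemma two_le_fullCount_of_ne {n k : ℕ} {U : Set (ℕ → ℕ → ℕ)} {F G : ℕ → ℕ → ℕ}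
    (hF : IsFilling n k F ∧ ∀ i, 1 ≤ i → i ≤ n - 1 → ∃ P ∈ U, MatchAt 2 k P F i)
    (hG : IsFilling n k G ∧ ∀ i, 1 ≤ i → i ≤ n - 1 → ∃ P ∈ U, MatchAt 2 k P G i)
    (hne : F ≠ G) : 2 ≤ fullCount n k U := by
  have : Finite {F : ℕ → ℕ → ℕ // IsFilling n k F ∧
      ∀ i, 1 ≤ i → i ≤ n - 1 → ∃ P ∈ U, MatchAt 2 k P F i} :=
    ((IsFilling.finite_setOf n k).subset fun _ hF => hF.1).to_subtype
  have : Nontrivial {F : ℕ → ℕ → ℕ // IsFilling n k F ∧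
      ∀ i, 1 ≤ i → i ≤ n - 1 → ∃ P ∈ U, MatchAt 2 k P F i} :=
    ⟨⟨F, hF⟩, ⟨G, hG⟩, fun h => hne (congrArg Subtype.val h)⟩
  exact Finite.one_lt_card

section Rank

variable {α β : Type*} [LinearOrder β] {s : Finset α} {f : α → β}

def rankIn (s : Finset α) (f : α → β) (p : α) : ℕ := #{q ∈ s | f q < f p} + 1

lemma rankIn_lt_rankIn_iff {p q : α} (hp : p ∈ s) :
    rankIn s f p < rankIn s f q ↔ f p < f q := by
  unfold rankIn
  constructor
  · intro h
    by_contra hle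
    have : {r ∈ s | f r < f q} ⊆ {r ∈ s | f r < f p} := fun r hr => by
      simp only [mem_filter] at hr ⊢
      exact ⟨hr.1, hr.2.trans_le (not_lt.1 hle)⟩
    have := card_le_card this
    omega
  · intro h
    have : {r ∈ s | f r < f p} ⊂ {r ∈ s | f r < f q} := by
      refine (ssubset_iff_of_subset fun r hr => ?_).2 ⟨p, by simp [hp, h], by simp⟩
      simp only [mem_filter] at hr ⊢
      exact ⟨hr.1, hr.2.trans h⟩
    have := card_lt_card this
    omega

lemma bijOn_rankIn (hf : Set.InjOn f s) : Set.BijOn (rankIn s f) s (Set.Icc 1 #s) := by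
  classical
  have hmaps : Set.MapsTo (rankIn s f) s (Finset.Icc 1 #s) := fun p hp => by
    have : {q ∈ s | f q < f p} ⊆ s.erase p := fun q hq => by
      simp only [mem_filter] at hq
      exact mem_erase.2 ⟨fun h => (h ▸ hq.2).false, hq.1⟩
    have := card_le_card this
    rw [card_erase_of_mem hp] at this
    have := card_pos.2 ⟨p, hp⟩
    simp only [coe_Icc, Set.mem_Icc, rankIn]
    omega
  have hinj : Set.InjOn (rankIn s f) s := fun p hp q hq h =>
    hf hp hq (le_antisymm (not_lt.1 fun h' => h.not_gt ((rankIn_lt_rankIn_iff hq).2 h'))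
      (not_lt.1 fun h' => h.not_lt ((rankIn_lt_rankIn_iff hp).2 h')))
  rw [← coe_Icc]
  exact ⟨hmaps, hinj, surjOn_of_injOn_of_card_le _ hmaps hinj (by simp)⟩

end Rank

def rect (k n : ℕ) : Finset (ℕ × ℕ) := Finset.Icc 1 k ×ˢ Finset.Icc 1 n

lemma mem_rect {k n i j : ℕ} : (i, j) ∈ rect k n ↔ (1 ≤ i ∧ i ≤ k) ∧ 1 ≤ j ∧ j ≤ n := by
  simp [rect]

section RankFilling

variable {β : Type*} [LinearOrder β] {k n : ℕ} {e : ℕ × ℕ → β}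

def rankFilling (k n : ℕ) (e : ℕ × ℕ → β) (i j : ℕ) : ℕ :=
  if (i, j) ∈ rect k n then rankIn (rect k n) e (i, j) else 0

lemma rankFilling_lt_rankFilling_iff {a j c j' : ℕ} (hp : (a, j) ∈ rect k n)
    (hq : (c, j') ∈ rect k n) :
    rankFilling k n e a j < rankFilling k n e c j' ↔ e (a, j) < e (c, j') := by
  simp only [rankFilling, if_pos hp, if_pos hq]
  exact rankIn_lt_rankIn_iff hp

lemma isFilling_rankFilling (he : Set.InjOn e (rect k n))
    (hcol : ∀ i j, 1 ≤ i → i < k → 1 ≤ j → j ≤ n → e (i, j) < e (i + 1, j)) :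
    IsFilling n k (rankFilling k n e) := by
  refine ⟨fun i j h => ?_, ?_, fun i j hi hik hj hjn => ?_⟩
  · by_contra hout
    exact h (if_neg (by rw [mem_rect]; tauto))
  · have hrect : Set.Icc 1 k ×ˢ Set.Icc 1 n = (rect k n : Set (ℕ × ℕ)) := by simp [rect]
    have hcard : k * n = #(rect k n) := by simp [rect]
    rw [hrect, hcard]
    exact (bijOn_rankIn he).congr fun p hp => (if_pos hp).symm
  · exact (rankFilling_lt_rankFilling_iff (mem_rect.2 ⟨⟨hi, hik.le⟩, hj, hjn⟩)
      (mem_rect.2 ⟨⟨by omega, hik⟩, hj, hjn⟩)).2 (hcol i j hi hik hj hjn)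

lemma matchAt_rankFilling {m i : ℕ} {P : ℕ → ℕ → ℕ} (hin : i - 1 + m ≤ n)
    (h : ∀ a b c d, 1 ≤ a → a ≤ k → 1 ≤ b → b ≤ m → 1 ≤ c → c ≤ k → 1 ≤ d → d ≤ m →
      (e (a, i - 1 + b) < e (c, i - 1 + d) ↔ P a b < P c d)) :
    MatchAt m k P (rankFilling k n e) i := by
  intro a b c d ha hak hb hbm hc hck hd hdm
  rw [rankFilling_lt_rankFilling_iff (mem_rect.2 ⟨⟨ha, hak⟩, by omega, by omega⟩)
    (mem_rect.2 ⟨⟨hc, hck⟩, by omega, by omega⟩)]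
  exact h a b c d ha hak hb hbm hc hck hd hdm

end RankFilling

section IntervalRep

variable {k m : ℕ} {P : ℕ → ℕ → ℕ} {x : ℕ → ℚ}

/-- The entry `P a j` is modelled by the endpoint `x a + j - 1` of the unit interval
`[x a, x a + 1]` of row `a`, shifted by `1` to avoid subtraction. -/
def IsIntervalRep (P : ℕ → ℕ → ℕ) (x : ℕ → ℚ) (m : ℕ) : Prop :=
  ∀ a j c j', 1 ≤ a → a ≤ m → 1 ≤ j → j ≤ 2 → 1 ≤ c → c ≤ m → 1 ≤ j' → j' ≤ 2 →
    P a j < P c j' → x a + j < x c + j'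

def IsNextLeftEnd (P : ℕ → ℕ → ℕ) (x : ℕ → ℚ) (m : ℕ) (t : ℚ) : Prop :=
  ∀ a, 1 ≤ a → a ≤ m → x a < t ∧ (P a 2 < P (m + 1) 1 → x a + 1 < t) ∧
    (P (m + 1) 1 < P a 2 → t < x a + 1)

lemma IsIntervalRep.update (hP : IsFilling 2 k P) (hstd : ∀ i, 1 ≤ i → i ≤ k → P i 1 < P i 2)
    (hmk : m + 1 ≤ k) (hx : IsIntervalRep P x m) {t : ℚ} (ht : IsNextLeftEnd P x m t) :
    IsIntervalRep P (Function.update x (m + 1) t) (m + 1) := by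
  have hcol : ∀ a j, 1 ≤ a → a ≤ m → 1 ≤ j → j ≤ 2 → P a j < P (m + 1) j :=
    fun a j ha ham hj hj2 => hP.lt_of_lt (a' := m + 1) ha (by omega) hmk hj hj2
  have hnew := hstd (m + 1) (by omega) hmk
  intro a j c j' ha ham hj hj2 hc hcm hj' hj'2 hlt
  rcases Nat.lt_or_ge a (m + 1) with ha' | ha' <;> rcases Nat.lt_or_ge c (m + 1) with hc' | hc'
  · rw [Function.update_of_ne (by omega), Function.update_of_ne (by omega)]
    exact hx a j c j' ha (by omega) hj hj2 hc (by omega) hj' hj'2 hlt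
  · obtain rfl : c = m + 1 := by omega
    obtain ⟨hlo, hlo', -⟩ := ht a ha (by omega)
    have := hcol a 1 ha (by omega) le_rfl (by omega)
    have := hcol a 2 ha (by omega) (by omega) le_rfl
    rw [Function.update_of_ne (by omega), Function.update_self]
    interval_cases j <;> interval_cases j' <;> push_cast
    all_goals first | linarith | linarith [hlo' hlt]
  · obtain rfl : a = m + 1 := by omega
    obtain ⟨hlo, -, hhi⟩ := ht c hc (by omega)
    have := hcol c 1 hc (by omega) le_rfl (by omega)
    have := hcol c 2 hc (by omega) (by omega) le_rfl
    rw [Function.update_self, Function.update_of_ne (by omega)]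
    interval_cases j <;> interval_cases j' <;> push_cast
    all_goals first | omega | linarith [hhi hlt]
  · obtain rfl : a = m + 1 := by omega
    obtain rfl : c = m + 1 := by omega
    rw [Function.update_self]
    interval_cases j <;> interval_cases j' <;> push_cast
    all_goals first | omega | linarith

lemma IsIntervalRep.exists_isNextLeftEnd (hP : IsFilling 2 k P) (hmk : m + 1 ≤ k)
    (hx : IsIntervalRep P x m) : ∃ t, IsNextLeftEnd P x m t := by
  classical
  let lo (a : ℕ) : ℚ := if P a 2 < P (m + 1) 1 then x a + 1 else x a
  obtain ⟨t, hlo, hhi⟩ := Finset.exists_between' ((Icc 1 m).image lo)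
    ({a ∈ Icc 1 m | P (m + 1) 1 < P a 2}.image (x · + 1)) (by
      simp only [mem_image, mem_filter, mem_Icc]
      rintro _ ⟨a, ⟨ha, ham⟩, rfl⟩ _ ⟨c, ⟨⟨hc, hcm⟩, hPc⟩, rfl⟩
      have hcol := hP.lt_of_lt (a' := m + 1) (j := 1) ha (by omega) hmk le_rfl (by omega)
      have h12 := hx a 1 c 2 ha ham le_rfl (by omega) hc hcm (by omega) le_rfl (by omega)
      push_cast at h12
      simp only [lo]
      split_ifs with hPa
      · have h22 := hx a 2 c 2 ha ham (by omega) le_rfl hc hcm (by omega) le_rfl (by omega)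
        push_cast at h22
        linarith
      · linarith)
  refine ⟨t, fun a ha ham => ⟨?_, fun h => ?_, fun h => ?_⟩⟩
  · have := hlo (lo a) (mem_image_of_mem _ (mem_Icc.2 ⟨ha, ham⟩))
    simp only [lo] at this
    split_ifs at this <;> linarith
  · have := hlo (lo a) (mem_image_of_mem _ (mem_Icc.2 ⟨ha, ham⟩))
    simpa only [lo, if_pos h] using this
  · exact hhi _ (mem_image_of_mem _ (mem_filter.2 ⟨mem_Icc.2 ⟨ha, ham⟩, h⟩))

lemma row_le_of_right_eq_left_succ (hP : IsFilling 2 k P)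
    (hstd : ∀ i, 1 ≤ i → i ≤ k → P i 1 < P i 2) {q c : ℕ} (hq : 1 ≤ q) (hqk : q ≤ k)
    (hck : c ≤ k) (h : P c 2 = P q 1 + 1) : c ≤ q := by
  by_contra h'
  have := hP.lt_of_lt (j := 2) hq (not_le.1 h') hck (by omega) le_rfl
  have := hstd q hq hqk
  omega

lemma row_lt_of_left_eq_right_succ (hP : IsFilling 2 k P)
    (hstd : ∀ i, 1 ≤ i → i ≤ k → P i 1 < P i 2) {q b : ℕ} (hq : 1 ≤ q) (hqk : q ≤ k)
    (hb : 1 ≤ b) (hbk : b ≤ k) (h : P b 1 = P q 2 + 1) : q < b := by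
  have := hstd b hb hbk
  exact (hP.lt_iff_lt (j := 2) hq hqk hb hbk (by omega) le_rfl).1 (by omega)

lemma IsIntervalRep.isNextLeftEnd_tie (hP : IsFilling 2 k P)
    (hstd : ∀ i, 1 ≤ i → i ≤ k → P i 1 < P i 2) (hmk : m + 1 ≤ k) (hx : IsIntervalRep P x m)
    {q c : ℕ} (hq : 1 ≤ q) (hqk : q < k) (hc : 1 ≤ c) (hck : c ≤ k)
    (hcq : P c 2 = P q 1 + 1) (hbq : P (m + 1) 1 = P q 2 + 1) :
    IsNextLeftEnd P x m (x c + 2) := by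
  have hqm : q ≤ m := Nat.le_of_lt_succ (row_lt_of_left_eq_right_succ hP hstd hq hqk.le
    (by omega) hmk hbq)
  have hcq' : c ≤ q := row_le_of_right_eq_left_succ hP hstd hq hqk.le hck hcq
  have hxqc := hx q 1 c 2 hq hqm le_rfl (by omega) hc (by omega) (by omega) le_rfl (by omega)
  push_cast at hxqc
  intro a ha ham
  have hPa := hP.lt_of_lt (a' := m + 1) (j := 1) ha (by omega) hmk le_rfl (by omega)
  refine ⟨?_, fun h => ?_, fun h => ?_⟩
  · have hne : P a 1 ≠ P q 2 := fun h => by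
      have := (hP.eq_and_eq_of_eq ha (by omega) le_rfl (by omega) hq hqk.le (by omega) le_rfl
        h).2
      omega
    have := hx a 1 q 2 ha ham le_rfl (by omega) hq hqm (by omega) le_rfl (by omega)
    push_cast at this
    linarith
  · have haq : a ≤ q := by
      by_contra h'
      have := hP.lt_of_lt (j := 2) hq (not_le.1 h') (by omega) (by omega) le_rfl
      omega
    have := hP.le_of_le (j := 1) ha haq hqk.le le_rfl (by omega)
    have := hx a 1 c 2 ha ham le_rfl (by omega) hc (by omega) (by omega) le_rfl (by omega)
    push_cast at this
    linarith
  · have hqa := (hP.lt_iff_lt (j := 2) hq hqk.le ha (by omega) (by omega) le_rfl).1 (by omega)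
    have := hP.le_of_le (a := q + 1) (j := 1) (by omega) hqa (by omega) le_rfl (by omega)
    have := hP.2.2 q 1 hq hqk le_rfl (by omega)
    have hne : P (q + 1) 1 ≠ P c 2 := fun h => by
      have := (hP.eq_and_eq_of_eq (by omega) hqk le_rfl (by omega) hc hck (by omega) le_rfl
        h).2
      omega
    have := hx c 2 a 1 hc (by omega) (by omega) le_rfl ha ham le_rfl (by omega) (by omega)
    push_cast at this
    linarith

lemma exists_isIntervalRep_tie (hP : IsFilling 2 k P)
    (hstd : ∀ i, 1 ≤ i → i ≤ k → P i 1 < P i 2) {q b c : ℕ} (hq : 1 ≤ q) (hqk : q < k)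
    (hb : 1 ≤ b) (hbk : b ≤ k) (hc : 1 ≤ c) (hck : c ≤ k)
    (hcq : P c 2 = P q 1 + 1) (hbq : P b 1 = P q 2 + 1) :
    ∃ x, IsIntervalRep P x k ∧ x b = x c + 2 := by
  have hcb : c < b := (row_le_of_right_eq_left_succ hP hstd hq hqk.le hck hcq).trans_lt
    (row_lt_of_left_eq_right_succ hP hstd hq hqk.le hb hbk hbq)
  suffices ∀ m ≤ k, ∃ x, IsIntervalRep P x m ∧ (b ≤ m → x b = x c + 2) from
    (this k le_rfl).imp fun x hx => ⟨hx.1, hx.2 hbk⟩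
  intro m hmk
  induction m with
  | zero => exact ⟨0, fun a _ _ _ ha ham => by omega, fun h => by omega⟩
  | succ m ih =>
    obtain ⟨x, hx, hxb⟩ := ih (by omega)
    by_cases hbm : b = m + 1
    · subst hbm
      refine ⟨_, hx.update hP hstd hmk (hx.isNextLeftEnd_tie hP hstd hmk hq hqk hc hck hcq hbq),
        fun _ => ?_⟩
      rw [Function.update_self, Function.update_of_ne (by omega)]
    · obtain ⟨t, ht⟩ := hx.exists_isNextLeftEnd hP hmk
      refine ⟨_, hx.update hP hstd hmk ht, fun hb' => ?_⟩
      rw [Function.update_of_ne hbm, Function.update_of_ne (by omega)]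
      exact hxb (by omega)

lemma IsIntervalRep.lt_iff (hP : IsFilling 2 k P) (hx : IsIntervalRep P x k) {a j c j' : ℕ}
    (ha : 1 ≤ a) (hak : a ≤ k) (hj : 1 ≤ j) (hj2 : j ≤ 2) (hc : 1 ≤ c) (hck : c ≤ k)
    (hj' : 1 ≤ j') (hj'2 : j' ≤ 2) : x a + j < x c + j' ↔ P a j < P c j' := by
  refine ⟨fun h => ?_, hx a j c j' ha hak hj hj2 hc hck hj' hj'2⟩
  rcases lt_trichotomy (P a j) (P c j') with hlt | heq | hgt
  · exact hlt
  · obtain ⟨rfl, rfl⟩ := hP.eq_and_eq_of_eq ha hak hj hj2 hc hck hj' hj'2 heq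
    exact absurd h (lt_irrefl _)
  · exact absurd (hx c j' a j hc hck hj' hj'2 ha hak hj hj2 hgt) h.not_gt

lemma IsIntervalRep.eq_and_eq_of_add_eq (hP : IsFilling 2 k P) (hx : IsIntervalRep P x k)
    {a j c j' : ℕ} (ha : 1 ≤ a) (hak : a ≤ k) (hj : 1 ≤ j) (hj2 : j ≤ 2) (hc : 1 ≤ c)
    (hck : c ≤ k) (hj' : 1 ≤ j') (hj'2 : j' ≤ 2) (h : x a + j = x c + j') : a = c ∧ j = j' :=
  hP.eq_and_eq_of_eq ha hak hj hj2 hc hck hj' hj'2 <| le_antisymm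
    (not_lt.1 fun h' => ((hx.lt_iff hP hc hck hj' hj'2 ha hak hj hj2).2 h').ne' h)
    (not_lt.1 fun h' => ((hx.lt_iff hP ha hak hj hj2 hc hck hj' hj'2).2 h').ne h)

end IntervalRep

def offsetKey (x : ℕ → ℚ) (tb : ℕ → ℤ) (p : ℕ × ℕ) : ℚ ×ₗ ℤ := toLex (x p.1 + p.2, tb p.2)

section OffsetFilling

variable {k n : ℕ} {P : ℕ → ℕ → ℕ} {x : ℕ → ℚ}

lemma IsIntervalRep.isFilling_rankFilling_offsetKey (hP : IsFilling 2 k P)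
    (hx : IsIntervalRep P x k) {tb : ℕ → ℤ} (htb : tb.Injective) :
    IsFilling n k (rankFilling k n (offsetKey x tb)) := by
  refine isFilling_rankFilling (fun ⟨a, j⟩ hp ⟨c, j'⟩ hp' h => ?_) fun i j hi hik _ _ => ?_
  · obtain ⟨h₁, h₂⟩ := Prod.mk_inj.1 (toLex.injective h)
    obtain rfl : j = j' := htb h₂
    rw [mem_coe, mem_rect] at hp hp'
    obtain ⟨rfl, -⟩ := hx.eq_and_eq_of_add_eq hP (j := 1) (j' := 1) hp.1.1 hp.1.2 le_rfl
      (by omega) hp'.1.1 hp'.1.2 le_rfl (by omega) (by push_cast; linarith)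
    rfl
  · have := hx i 1 (i + 1) 1 hi hik.le le_rfl (by omega) (by omega) hik le_rfl (by omega)
      (hP.2.2 i 1 hi hik le_rfl (by omega))
    exact Prod.Lex.toLex_lt_toLex.2 (Or.inl (by simp only; push_cast at this ⊢; linarith))

lemma IsIntervalRep.matchAt_rankFilling_offsetKey (hP : IsFilling 2 k P)
    (hx : IsIntervalRep P x k) {tb : ℕ → ℤ} {i : ℕ} (hi : 1 ≤ i) (hin : i + 1 ≤ n) :
    MatchAt 2 k P (rankFilling k n (offsetKey x tb)) i := by
  refine matchAt_rankFilling (by omega) fun a j c j' ha hak hj hj2 hc hck hj' hj'2 => ?_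
  rw [← hx.lt_iff hP ha hak hj hj2 hc hck hj' hj'2, offsetKey, offsetKey,
    Prod.Lex.toLex_lt_toLex]
  simp only
  push_cast
  constructor
  · rintro (h | ⟨h, h'⟩)
    · linarith
    · obtain ⟨rfl, rfl⟩ := hx.eq_and_eq_of_add_eq hP ha hak hj hj2 hc hck hj' hj'2 (by linarith)
      exact absurd h' (lt_irrefl _)
  · exact fun h => Or.inl (by linarith)

end OffsetFilling

theorem stmt17_general (k : ℕ) (P : ℕ → ℕ → ℕ) (hP : IsFilling 2 k P)
    (hstd : ∀ i, 1 ≤ i → i ≤ k → P i 1 < P i 2)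
    (hnd : ∃ i, 1 ≤ i ∧ i < k ∧ P i 1 + 1 ≠ P (i + 1) 1 ∧ P i 2 + 1 ≠ P (i + 1) 2)
    (n : ℕ) (hn : 3 ≤ n) :
    2 ≤ fullCount n k {P} := by
  obtain ⟨q, hq, hqk, hgap₁, hgap₂⟩ := hnd
  obtain ⟨c, j, hc, hck, hj₁, hj₂, hj, hcq⟩ :=
    hP.exists_eq_succ hq hqk le_rfl (by norm_num) hgap₁
  obtain rfl : j = 2 := by omega
  obtain ⟨b, j, hb, hbk, hj₁, hj₂, hj, hbq⟩ :=
    hP.exists_eq_succ hq hqk (by norm_num) le_rfl hgap₂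
  obtain rfl : j = 1 := by omega
  obtain ⟨x, hx, hxbc⟩ := exists_isIntervalRep_tie hP hstd hq hqk hb hbk hc hck hcq hbq
  have hfull (tb : ℕ → ℤ) (htb : tb.Injective) :
      IsFilling n k (rankFilling k n (offsetKey x tb)) ∧ ∀ i, 1 ≤ i → i ≤ n - 1 →
        ∃ P' ∈ ({P} : Set (ℕ → ℕ → ℕ)), MatchAt 2 k P' (rankFilling k n (offsetKey x tb)) i :=
    ⟨hx.isFilling_rankFilling_offsetKey hP htb,
      fun i hi hin => ⟨P, rfl, hx.matchAt_rankFilling_offsetKey hP hi (by omega)⟩⟩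
  have hb1 : (b, 1) ∈ rect k n := mem_rect.2 ⟨⟨hb, hbk⟩, le_rfl, by omega⟩
  have hc3 : (c, 3) ∈ rect k n := mem_rect.2 ⟨⟨hc, hck⟩, by omega, hn⟩
  have hkey : x b + ((1 : ℕ) : ℚ) = x c + ((3 : ℕ) : ℚ) := by push_cast; linarith
  have hneg : Function.Injective fun j : ℕ => -(j : ℤ) := fun _ _ h => by simpa using h
  refine two_le_fullCount_of_ne (hfull _ Nat.cast_injective) (hfull _ hneg) fun h => ?_
  have h₁ := (rankFilling_lt_rankFilling_iff (e := offsetKey x Nat.cast) hb1 hc3).2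
    (Prod.Lex.toLex_lt_toLex.2 (Or.inr ⟨hkey, by norm_num⟩))
  have h₂ := (rankFilling_lt_rankFilling_iff (e := offsetKey x fun j : ℕ => -(j : ℤ)) hc3 hb1).2
    (Prod.Lex.toLex_lt_toLex.2 (Or.inr ⟨hkey.symm, by norm_num⟩))
  rw [h] at h₁
  exact h₁.asymm h₂

/-- For a non-degenerate standard tableau `P` of shape `2^k` with `k ≥ 2`,
`full_n^P ≥ 2` for all `n ≥ 3`. -/
theorem stmt17 (k : ℕ) (hk : 2 ≤ k) (P : ℕ → ℕ → ℕ) (hP : IsFilling 2 k P)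
    (hstd : ∀ i, 1 ≤ i → i ≤ k → P i 1 < P i 2)
    (hnd : ∃ i, 1 ≤ i ∧ i < k ∧ P i 1 + 1 ≠ P (i + 1) 1 ∧ P i 2 + 1 ≠ P (i + 1) 2)
    (n : ℕ) (hn : 3 ≤ n) :
    2 ≤ fullCount n k {P} :=
  stmt17_general k P hP hstd hnd n hn
end
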